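/- arXiv:1207.4597 — 7 statements merged into one kernel-verified Lean document; each statement's English description precedes it below -/
import Mathlib

section
/- Two message sets m and m' on a factor graph lead to the same beliefs (i.e., b_i computed from m equals b_i computed from m' for every variable node i, and b_a computed from m equals b_a computed from m' for every factor node a) if and only if there exists a family of strictly positive constants (c_{ai})_{(a,i)∈E} such that m'_{a→i}(x) = c_{ai}·m_{a→i}(x) for every edge (a,i) ∈ E and every x ∈ {1,…,q}. -/
open Finset Filter

variable {V F : Type*} [Fintype V] [DecidableEq V] [Fintype F] [DecidableEq F]

/-- Configurations on the factor `a`: tuples `x_a ∈ {1,…,q}^a`. -/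
abbrev Config (S : F → Finset V) (q : ℕ) (a : F) := {i : V // i ∈ S a} → Fin q

/-- The message `n_{i→a}(x_i) = φ_i(x_i) ∏_{a'∋i, a'≠a} m_{a'→i}(x_i)`. -/
noncomputable def nmsg (S : F → Finset V) {q : ℕ} (φ : V → Fin q → ℝ)
    (m : F → V → Fin q → ℝ) (i : V) (a : F) (x : Fin q) : ℝ :=
  φ i x * ∏ a' ∈ univ.filter (fun a' : F => i ∈ S a' ∧ a' ≠ a), m a' i x

/-- The belief-propagation update `Θ_{ai}(m)(x_i) = Σ_{x_{a∖i}} ψ_a(x_a) ∏_{j∈a∖i} n_{j→a}(x_j)`. -/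
noncomputable def theta (S : F → Finset V) {q : ℕ} (φ : V → Fin q → ℝ)
    (ψ : ∀ a : F, Config S q a → ℝ) (m : F → V → Fin q → ℝ)
    (a : F) (i : V) (hi : i ∈ S a) (x : Fin q) : ℝ :=
  ∑ y ∈ univ.filter (fun y : Config S q a => y ⟨i, hi⟩ = x),
    ψ a y * ∏ j ∈ (S a).attach.filter (fun j => j.1 ≠ i), nmsg S φ m j.1 a (y j)

/-- The normalization constant `Z_i(m)` making the variable belief sum to `1`. -/
noncomputable def Zv (S : F → Finset V) {q : ℕ} (φ : V → Fin q → ℝ)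
    (m : F → V → Fin q → ℝ) (i : V) : ℝ :=
  ∑ x : Fin q, φ i x * ∏ a ∈ univ.filter (fun a : F => i ∈ S a), m a i x

/-- The variable belief `b_i(x_i) = φ_i(x_i) ∏_{a∋i} m_{a→i}(x_i) / Z_i(m)`. -/
noncomputable def bv (S : F → Finset V) {q : ℕ} (φ : V → Fin q → ℝ)
    (m : F → V → Fin q → ℝ) (i : V) (x : Fin q) : ℝ :=
  (φ i x * ∏ a ∈ univ.filter (fun a : F => i ∈ S a), m a i x) / Zv S φ m i

/-- The normalization constant `Z_a(m)` making the factor belief sum to `1`. -/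
noncomputable def Zf (S : F → Finset V) {q : ℕ} (φ : V → Fin q → ℝ)
    (ψ : ∀ a : F, Config S q a → ℝ) (m : F → V → Fin q → ℝ) (a : F) : ℝ :=
  ∑ y : Config S q a, ψ a y * ∏ j ∈ (S a).attach, nmsg S φ m j.1 a (y j)

/-- The factor belief `b_a(x_a) = ψ_a(x_a) ∏_{i∈a} n_{i→a}(x_i) / Z_a(m)`. -/
noncomputable def bfn (S : F → Finset V) {q : ℕ} (φ : V → Fin q → ℝ)
    (ψ : ∀ a : F, Config S q a → ℝ) (m : F → V → Fin q → ℝ) (a : F)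
    (y : Config S q a) : ℝ :=
  (ψ a y * ∏ j ∈ (S a).attach, nmsg S φ m j.1 a (y j)) / Zf S φ ψ m a

/-- Two message sets lead to the same beliefs iff they are proportional edge by edge,
with strictly positive proportionality constants. -/
theorem beliefs_eq_iff_proportional
    (q : ℕ) (hq : 1 ≤ q) (S : F → Finset V) (hS : ∀ a, (S a).Nonempty)
    (φ : V → Fin q → ℝ) (ψ : ∀ a : F, Config S q a → ℝ)
    (hφ : ∀ i x, 0 < φ i x) (hψ : ∀ a y, 0 < ψ a y)
    (m m' : F → V → Fin q → ℝ)
    (hm : ∀ a i, i ∈ S a → ∀ x, 0 < m a i x)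
    (hm' : ∀ a i, i ∈ S a → ∀ x, 0 < m' a i x) :
    ((∀ i x, bv S φ m i x = bv S φ m' i x) ∧
      (∀ (a : F) (y : Config S q a), bfn S φ ψ m a y = bfn S φ ψ m' a y)) ↔
      (∃ c : F → V → ℝ, (∀ a i, i ∈ S a → 0 < c a i) ∧
        ∀ a i, i ∈ S a → ∀ x, m' a i x = c a i * m a i x) := by

  haveI : NeZero q := ⟨by omega⟩
  set x0 : Fin q := ⟨0, hq⟩ with hx0
  -- positivity of nmsg
  have hn_pos : ∀ (mm : F → V → Fin q → ℝ), (∀ a i, i ∈ S a → ∀ x, 0 < mm a i x) →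
      ∀ i a x, 0 < nmsg S φ mm i a x := by
    intro mm hmm i a x
    exact mul_pos (hφ i x)
      (Finset.prod_pos fun a' ha' => hmm a' i (Finset.mem_filter.mp ha').2.1 x)
  have hZv_pos : ∀ (mm : F → V → Fin q → ℝ), (∀ a i, i ∈ S a → ∀ x, 0 < mm a i x) →
      ∀ i, 0 < Zv S φ mm i := by
    intro mm hmm i
    refine Finset.sum_pos (fun x _ => mul_pos (hφ i x)
      (Finset.prod_pos fun a' ha' => hmm a' i (Finset.mem_filter.mp ha').2 x)) univ_nonempty
  have hZf_pos : ∀ (mm : F → V → Fin q → ℝ), (∀ a i, i ∈ S a → ∀ x, 0 < mm a i x) →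
      ∀ a, 0 < Zf S φ ψ mm a := by
    intro mm hmm a
    refine Finset.sum_pos (fun y _ => mul_pos (hψ a y)
      (Finset.prod_pos fun j _ => hn_pos mm hmm j.1 a (y j))) univ_nonempty
  -- key identity: m a i x * nmsg = φ i x * ∏_{a∋i} m
  have hkey : ∀ (mm : F → V → Fin q → ℝ) a i, i ∈ S a → ∀ x,
      mm a i x * nmsg S φ mm i a x =
        φ i x * ∏ a' ∈ univ.filter (fun a' : F => i ∈ S a'), mm a' i x := by
    intro mm a i hi x
    have hfil : univ.filter (fun a' : F => i ∈ S a' ∧ a' ≠ a) =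
        (univ.filter (fun a' : F => i ∈ S a')).erase a := by
      ext a'; simp [Finset.mem_erase, and_comm]
    rw [nmsg, hfil,
      ← Finset.mul_prod_erase _ _ (Finset.mem_filter.mpr ⟨Finset.mem_univ a, hi⟩)]
    ring
  constructor
  · rintro ⟨hbv, hbf⟩
    refine ⟨fun a i => m' a i x0 / m a i x0, fun a i hi =>
      div_pos (hm' a i hi x0) (hm a i hi x0), fun a i hi x => ?_⟩
    -- variable belief equality, cross-multiplied
    have hA : ∀ x : Fin q,
        (φ i x * ∏ a' ∈ univ.filter (fun a' : F => i ∈ S a'), m a' i x) * Zv S φ m' i =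
        (φ i x * ∏ a' ∈ univ.filter (fun a' : F => i ∈ S a'), m' a' i x) * Zv S φ m i := by
      intro x
      have h := hbv i x
      rw [bv, bv, div_eq_div_iff (ne_of_gt (hZv_pos m hm i)) (ne_of_gt (hZv_pos m' hm' i))] at h
      exact h
    -- factor belief equality, cross-multiplied
    have hB : ∀ y : Config S q a,
        (∏ j ∈ (S a).attach, nmsg S φ m j.1 a (y j)) * Zf S φ ψ m' a =
        (∏ j ∈ (S a).attach, nmsg S φ m' j.1 a (y j)) * Zf S φ ψ m a := by
      intro y
      have h := hbf a y
      rw [bfn, bfn, div_eq_div_iff (ne_of_gt (hZf_pos m hm a)) (ne_of_gt (hZf_pos m' hm' a))] at h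
      exact mul_left_cancel₀ (ne_of_gt (hψ a y)) (by linear_combination h)
    -- product over configuration updated at coordinate i
    have hP : ∀ (mm : F → V → Fin q → ℝ) (x : Fin q),
        (∏ j ∈ (S a).attach,
          nmsg S φ mm j.1 a (Function.update (fun _ => x0) ⟨i, hi⟩ x j)) =
        nmsg S φ mm i a x *
          ∏ j ∈ (S a).attach.erase ⟨i, hi⟩, nmsg S φ mm j.1 a x0 := by
      intro mm x
      rw [← Finset.mul_prod_erase _ _ (Finset.mem_attach _ ⟨i, hi⟩)]
      congr 1
      · rw [Function.update_self]
      · refine Finset.prod_congr rfl fun j hj => ?_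
        rw [Function.update_of_ne (Finset.ne_of_mem_erase hj)]
    set n : Fin q → ℝ := fun x => nmsg S φ m i a x with hn
    set n' : Fin q → ℝ := fun x => nmsg S φ m' i a x with hn'
    set Rm : ℝ := ∏ j ∈ (S a).attach.erase ⟨i, hi⟩, nmsg S φ m j.1 a x0 with hRm
    set Rm' : ℝ := ∏ j ∈ (S a).attach.erase ⟨i, hi⟩, nmsg S φ m' j.1 a x0 with hRm'
    have hRm_pos : 0 < Rm := Finset.prod_pos fun j _ => hn_pos m hm j.1 a x0
    have hRm'_pos : 0 < Rm' := Finset.prod_pos fun j _ => hn_pos m' hm' j.1 a x0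
    have hE : ∀ x : Fin q,
        (n x * Rm) * Zf S φ ψ m' a = (n' x * Rm') * Zf S φ ψ m a := by
      intro x
      have := hB (Function.update (fun _ => x0) ⟨i, hi⟩ x)
      rwa [hP m x, hP m' x] at this
    -- cross ratio on nmsg
    have hG3 : n' x * n x0 = n' x0 * n x := by
      have h1 := hE x
      have h2 := hE x0
      have hpos : (0:ℝ) < Rm' * Zf S φ ψ m a := mul_pos hRm'_pos (hZf_pos m hm a)
      have : (Rm' * Zf S φ ψ m a) * (n' x * n x0) = (Rm' * Zf S φ ψ m a) * (n' x0 * n x) := by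
        linear_combination (n x) * h2 - (n x0) * h1
      exact mul_left_cancel₀ (ne_of_gt hpos) this
    -- edge relation from variable beliefs
    have hG : ∀ x : Fin q,
        (m a i x * n x) * Zv S φ m' i = (m' a i x * n' x) * Zv S φ m i := by
      intro x
      have := hA x
      rw [← hkey m a i hi x, ← hkey m' a i hi x] at this
      exact this
    have hG1 := hG x
    have hG2 := hG x0
    -- conclude
    have hApos : (0:ℝ) < n' x * n' x0 * Zv S φ m i :=
      mul_pos (mul_pos (hn_pos m' hm' i a x) (hn_pos m' hm' i a x0)) (hZv_pos m hm i)
    have hT : m' a i x * m a i x0 = m' a i x0 * m a i x := by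
      have : (n' x * n' x0 * Zv S φ m i) * (m' a i x * m a i x0) =
          (n' x * n' x0 * Zv S φ m i) * (m' a i x0 * m a i x) := by
        linear_combination (m a i x * n' x) * hG2 - (m a i x0 * n' x0) * hG1
          - (m a i x * m a i x0 * Zv S φ m' i) * hG3
      exact mul_left_cancel₀ (ne_of_gt hApos) this
    rw [div_mul_eq_mul_div, eq_div_iff (ne_of_gt (hm a i hi x0))]
    linear_combination hT
  · rintro ⟨c, hc_pos, hc⟩
    have hC_pos : ∀ i, 0 < ∏ a' ∈ univ.filter (fun a' : F => i ∈ S a'), c a' i :=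
      fun i => Finset.prod_pos fun a' ha' => hc_pos a' i (Finset.mem_filter.mp ha').2
    have hMprod : ∀ i x,
        (∏ a' ∈ univ.filter (fun a' : F => i ∈ S a'), m' a' i x) =
        (∏ a' ∈ univ.filter (fun a' : F => i ∈ S a'), c a' i) *
          ∏ a' ∈ univ.filter (fun a' : F => i ∈ S a'), m a' i x := by
      intro i x
      rw [← Finset.prod_mul_distrib]
      exact Finset.prod_congr rfl fun a' ha' => hc a' i (Finset.mem_filter.mp ha').2 x
    have hZv' : ∀ i, Zv S φ m' i =
        (∏ a' ∈ univ.filter (fun a' : F => i ∈ S a'), c a' i) * Zv S φ m i := by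
      intro i
      rw [Zv, Zv, Finset.mul_sum]
      exact Finset.sum_congr rfl fun x _ => by rw [hMprod]; ring
    have hD_pos : ∀ i a, 0 < ∏ a' ∈ univ.filter (fun a' : F => i ∈ S a' ∧ a' ≠ a), c a' i :=
      fun i a => Finset.prod_pos fun a' ha' => hc_pos a' i (Finset.mem_filter.mp ha').2.1
    have hnm : ∀ i a x, nmsg S φ m' i a x =
        (∏ a' ∈ univ.filter (fun a' : F => i ∈ S a' ∧ a' ≠ a), c a' i) * nmsg S φ m i a x := by
      intro i a x
      rw [nmsg, nmsg, ← mul_assoc, mul_comm (∏ a' ∈ _, c a' i) (φ i x), mul_assoc,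
        ← Finset.prod_mul_distrib]
      congr 1
      exact Finset.prod_congr rfl fun a' ha' => hc a' i (Finset.mem_filter.mp ha').2.1 x
    set Ca : F → ℝ := fun a => ∏ j ∈ (S a).attach,
      ∏ a' ∈ univ.filter (fun a' : F => j.1 ∈ S a' ∧ a' ≠ a), c a' j.1 with hCa
    have hCa_pos : ∀ a, 0 < Ca a := fun a => Finset.prod_pos fun j _ => hD_pos j.1 a
    have hPprod : ∀ a (y : Config S q a),
        (∏ j ∈ (S a).attach, nmsg S φ m' j.1 a (y j)) =
        Ca a * ∏ j ∈ (S a).attach, nmsg S φ m j.1 a (y j) := by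
      intro a y
      rw [hCa, ← Finset.prod_mul_distrib]
      exact Finset.prod_congr rfl fun j _ => hnm j.1 a (y j)
    have hZf' : ∀ a, Zf S φ ψ m' a = Ca a * Zf S φ ψ m a := by
      intro a
      rw [Zf, Zf, Finset.mul_sum]
      exact Finset.sum_congr rfl fun y _ => by rw [hPprod]; ring
    constructor
    · intro i x
      rw [bv, bv, hMprod, hZv']
      rw [show φ i x * ((∏ a' ∈ univ.filter (fun a' : F => i ∈ S a'), c a' i) *
          ∏ a' ∈ univ.filter (fun a' : F => i ∈ S a'), m a' i x) =
        (∏ a' ∈ univ.filter (fun a' : F => i ∈ S a'), c a' i) *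
          (φ i x * ∏ a' ∈ univ.filter (fun a' : F => i ∈ S a'), m a' i x) by ring]
      rw [mul_div_mul_left _ _ (ne_of_gt (hC_pos i))]
    · intro a y
      rw [bfn, bfn, hPprod, hZf']
      rw [show ψ a y * (Ca a * ∏ j ∈ (S a).attach, nmsg S φ m j.1 a (y j)) =
        Ca a * (ψ a y * ∏ j ∈ (S a).attach, nmsg S φ m j.1 a (y j)) by ring]
      rw [mul_div_mul_left _ _ (ne_of_gt (hCa_pos a))]
end

section
/- Let m be a message set with associated beliefs b, and let N be a positive homogeneous normalization such that N_{ai}(m_{a→i}) = 1 for every edge (a,i) ∈ E. For (a,i) ∈ E define K_{ai}(x_{a∖i}; x_i) = ψ_a(x_a) · (∏_{j∈a} b_j(x_j)) / b_a(x_a). Then for every edge (a,i), every fixed tuple x_{a∖i} ∈ {1,…,q}^{a∖i}, and every x_i ∈ {1,…,q}: m_{a→i}(x_i) = K_{ai}(x_{a∖i}; x_i) / N_{ai}(K_{ai}(x_{a∖i}; ·)). In particular, the messages are a function of the beliefs alone. -/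
open Finset Filter

variable {V F : Type*} [Fintype V] [DecidableEq V] [Fintype F] [DecidableEq F]

/- With `K_{ai}(x_a) = ψ_a(x_a) ∏_{j∈a} b_j(x_j) / b_a(x_a)`, splitting each `b_j` as
`m_{a→j} n_{j→a} / Z_j` makes the cavity messages `n_{j→a}` and `ψ_a` cancel against `b_a`, leaving
`K_{ai}(x_a) = (∏_{j∈a} m_{a→j}(x_j)) Z_a / ∏_{j∈a} Z_j`. With `x_{a∖i}` frozen this is a positive
constant times `m_{a→i}(x_i)`, and homogeneity of `N_{ai}` together with `N_{ai}(m_{a→i}) = 1`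
identifies the constant as `N_{ai}(K_{ai}(x_{a∖i}; ·))`. -/

theorem Finset.prod_update_eq_mul_prod_erase {ι α M : Type*} [DecidableEq ι] [CommMonoid M]
    {s : Finset ι} {i : ι} (hi : i ∈ s) (f : ι → α → M) (y : ι → α) (b : α) :
    ∏ j ∈ s, f j (Function.update y i b j) = f i b * ∏ j ∈ s.erase i, f j (y j) := by
  rw [← mul_prod_erase s _ hi, Function.update_self]
  congr 1
  exact prod_congr rfl fun j hj => by rw [Function.update_of_ne (ne_of_mem_erase hj)]

section BeliefPropagation

variable {q : ℕ} (S : F → Finset V) (φ : V → Fin q → ℝ) (ψ : ∀ a : F, Config S q a → ℝ)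
  (m : F → V → Fin q → ℝ)

/-- The paper's `K_{ai}(x_{a∖i}; x_i)`, read as a function of the full configuration `x_a`
(it does not depend on `i`). -/
noncomputable def beliefKernel (a : F) (x : Config S q a) : ℝ :=
  ψ a x * (∏ j ∈ (S a).attach, bv S φ m j.1 (x j)) / bfn S φ ψ m a x

omit [Fintype V] in
theorem nmsg_pos (hφ : ∀ i x, 0 < φ i x) (hm : ∀ a i, i ∈ S a → ∀ x, 0 < m a i x)
    (i : V) (a : F) (x : Fin q) : 0 < nmsg S φ m i a x :=
  mul_pos (hφ i x) (prod_pos fun a' ha' => hm a' i (mem_filter.1 ha').2.1 x)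

omit [Fintype V] [DecidableEq F] in
theorem Zv_pos [Nonempty (Fin q)] (hφ : ∀ i x, 0 < φ i x)
    (hm : ∀ a i, i ∈ S a → ∀ x, 0 < m a i x) (i : V) : 0 < Zv S φ m i :=
  sum_pos (fun x _ => mul_pos (hφ i x) (prod_pos fun a ha => hm a i (mem_filter.1 ha).2 x))
    univ_nonempty

omit [Fintype V] in
theorem Zf_pos (hφ : ∀ i x, 0 < φ i x) (hψ : ∀ a y, 0 < ψ a y)
    (hm : ∀ a i, i ∈ S a → ∀ x, 0 < m a i x) (a : F) [Nonempty (Config S q a)] :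
    0 < Zf S φ ψ m a :=
  sum_pos (fun y _ => mul_pos (hψ a y) (prod_pos fun j _ => nmsg_pos S φ m hφ hm j a (y j)))
    univ_nonempty

omit [Fintype V] in
theorem bv_eq_mul_nmsg_div {a : F} {i : V} (hi : i ∈ S a) (x : Fin q) :
    bv S φ m i x = m a i x * nmsg S φ m i a x / Zv S φ m i := by
  have hsplit : univ.filter (fun a' : F => i ∈ S a' ∧ a' ≠ a)
      = (univ.filter fun a' : F => i ∈ S a').erase a := by
    rw [filter_and, filter_ne', inter_erase, inter_univ]
  rw [bv, nmsg, hsplit, ← mul_prod_erase _ _ (mem_filter.2 ⟨mem_univ a, hi⟩), mul_left_comm]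

omit [Fintype V] in
theorem beliefKernel_eq (hφ : ∀ i x, 0 < φ i x) (hψ : ∀ a y, 0 < ψ a y)
    (hm : ∀ a i, i ∈ S a → ∀ x, 0 < m a i x) (a : F) (x : Config S q a) :
    beliefKernel S φ ψ m a x
      = (∏ j ∈ (S a).attach, m a j.1 (x j)) *
          (Zf S φ ψ m a / ∏ j ∈ (S a).attach, Zv S φ m j.1) := by
  have : Nonempty (Config S q a) := ⟨x⟩
  have hZf := Zf_pos S φ ψ m hφ hψ hm a
  have hψx := hψ a x
  have hn : 0 < ∏ j ∈ (S a).attach, nmsg S φ m j.1 a (x j) :=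
    prod_pos fun j _ => nmsg_pos S φ m hφ hm j a (x j)
  rw [beliefKernel, bfn, prod_congr rfl fun j _ => bv_eq_mul_nmsg_div S φ m j.2 (x j),
    prod_div_distrib, prod_mul_distrib]
  field_simp

omit [Fintype V] in
theorem exists_pos_beliefKernel_update_eq_mul (hφ : ∀ i x, 0 < φ i x) (hψ : ∀ a y, 0 < ψ a y)
    (hm : ∀ a i, i ∈ S a → ∀ x, 0 < m a i x) {a : F} {i : V} (hi : i ∈ S a)
    (y : Config S q a) :
    ∃ c > 0, ∀ s, beliefKernel S φ ψ m a (Function.update y ⟨i, hi⟩ s) = c * m a i s := by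
  have : Nonempty (Fin q) := ⟨y ⟨i, hi⟩⟩
  refine ⟨(∏ j ∈ (S a).attach.erase ⟨i, hi⟩, m a j.1 (y j)) *
      (Zf S φ ψ m a / ∏ j ∈ (S a).attach, Zv S φ m j.1), ?_, fun s => ?_⟩
  · exact mul_pos (prod_pos fun j _ => hm a j.1 j.2 (y j))
      (div_pos (Zf_pos S φ ψ m hφ hψ hm a) (prod_pos fun j _ => Zv_pos S φ m hφ hm j.1))
  · rw [beliefKernel_eq S φ ψ m hφ hψ hm,
      prod_update_eq_mul_prod_erase (mem_attach _ _) (fun j : {v // v ∈ S a} => m a j.1)]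
    ring

end BeliefPropagation

theorem messages_determined_by_beliefs_general
    (q : ℕ) (S : F → Finset V)
    (φ : V → Fin q → ℝ) (ψ : ∀ a : F, Config S q a → ℝ)
    (hφ : ∀ i x, 0 < φ i x) (hψ : ∀ a y, 0 < ψ a y)
    (m : F → V → Fin q → ℝ) (hm : ∀ a i, i ∈ S a → ∀ x, 0 < m a i x)
    (N : F → V → (Fin q → ℝ) → ℝ)
    (hNhom : ∀ a i, i ∈ S a → ∀ lam : ℝ, 0 ≤ lam → ∀ u : Fin q → ℝ, (∀ x, 0 ≤ u x) →
      N a i (fun x => lam * u x) = lam * N a i u)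
    (hN1 : ∀ a i, i ∈ S a → N a i (m a i) = 1) :
    ∀ a i (hi : i ∈ S a) (y : Config S q a) (t : Fin q),
      m a i t
        = (ψ a (Function.update y ⟨i, hi⟩ t) *
            (∏ j ∈ (S a).attach, bv S φ m j.1 (Function.update y ⟨i, hi⟩ t j)) /
            bfn S φ ψ m a (Function.update y ⟨i, hi⟩ t)) /
          N a i (fun s : Fin q =>
            ψ a (Function.update y ⟨i, hi⟩ s) *
              (∏ j ∈ (S a).attach, bv S φ m j.1 (Function.update y ⟨i, hi⟩ s j)) /
              bfn S φ ψ m a (Function.update y ⟨i, hi⟩ s)) := by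
  intro a i hi y t
  obtain ⟨c, hc, hK⟩ := exists_pos_beliefKernel_update_eq_mul S φ ψ m hφ hψ hm hi y
  change m a i t = beliefKernel S φ ψ m a (Function.update y ⟨i, hi⟩ t) /
    N a i (fun s => beliefKernel S φ ψ m a (Function.update y ⟨i, hi⟩ s))
  simp only [hK]
  rw [hNhom a i hi c hc.le (m a i) fun x => (hm a i hi x).le, hN1 a i hi, mul_one,
    mul_div_cancel_left₀ _ hc.ne']

/-- If the messages are normalized (`N_{ai}(m_{a→i}) = 1`), they can be recovered from the
beliefs alone: `m_{a→i}(x_i) = K_{ai}(x_{a∖i}; x_i) / N_{ai}(K_{ai}(x_{a∖i}; ·))` where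
`K_{ai}(x_{a∖i}; x_i) = ψ_a(x_a) (∏_{j∈a} b_j(x_j)) / b_a(x_a)`, for any fixed `x_{a∖i}`. -/
theorem messages_determined_by_beliefs
    (q : ℕ) (hq : 1 ≤ q) (S : F → Finset V) (hS : ∀ a, (S a).Nonempty)
    (φ : V → Fin q → ℝ) (ψ : ∀ a : F, Config S q a → ℝ)
    (hφ : ∀ i x, 0 < φ i x) (hψ : ∀ a y, 0 < ψ a y)
    (m : F → V → Fin q → ℝ) (hm : ∀ a i, i ∈ S a → ∀ x, 0 < m a i x)
    (N : F → V → (Fin q → ℝ) → ℝ)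
    (hNhom : ∀ a i, i ∈ S a → ∀ lam : ℝ, 0 ≤ lam → ∀ u : Fin q → ℝ, (∀ x, 0 ≤ u x) →
      N a i (fun x => lam * u x) = lam * N a i u)
    (hNzero : ∀ a i, i ∈ S a → ∀ u : Fin q → ℝ, (∀ x, 0 ≤ u x) → (N a i u = 0 ↔ u = 0))
    (hNnonneg : ∀ a i, i ∈ S a → ∀ u : Fin q → ℝ, (∀ x, 0 ≤ u x) → 0 ≤ N a i u)
    (hN1 : ∀ a i, i ∈ S a → N a i (m a i) = 1) :
    ∀ a i (hi : i ∈ S a) (y : Config S q a) (t : Fin q),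
      m a i t
        = (ψ a (Function.update y ⟨i, hi⟩ t) *
            (∏ j ∈ (S a).attach, bv S φ m j.1 (Function.update y ⟨i, hi⟩ t j)) /
            bfn S φ ψ m a (Function.update y ⟨i, hi⟩ t)) /
          N a i (fun s : Fin q =>
            ψ a (Function.update y ⟨i, hi⟩ s) *
              (∏ j ∈ (S a).attach, bv S φ m j.1 (Function.update y ⟨i, hi⟩ s j)) /
              bfn S φ ψ m a (Function.update y ⟨i, hi⟩ s)) :=
  messages_determined_by_beliefs_general q S φ ψ hφ hψ m hm N hNhom hN1
end

section
/- Let b̂ be a family of strictly positive compatible beliefs: probability vectors b̂_i on {1,…,q} for each i ∈ V and b̂_a on {1,…,q}^a for each a ∈ F, satisfying Σ_{x_{a∖i}} b̂_a(x_a) = b̂_i(x_i) for every a and every i ∈ a. Choose the local functions φ_i(x_i) = b̂_i(x_i) and ψ_a(x_a) = b̂_a(x_a) / ∏_{i∈a} b̂_i(x_i). Then the constant message set m with m_{a→i}(x) = 1 for all edges and all x is a fixed point of the BP update, Θ_{ai}(m)(x_i) = 1 = m_{a→i}(x_i), and its associated beliefs are exactly b_i = b̂_i and b_a = b̂_a (with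 normalization constants Z_i(m) = Z_a(m) = 1). -/
open Finset Filter

variable {V F : Type*} [Fintype V] [DecidableEq V] [Fintype F] [DecidableEq F]

/-
With `φ_i = b̂_i` and constant messages, each cavity field `n_{j→a}` is just `b̂_j`, so the
weight `ψ_a ∏_{j∈a} n_{j→a}` of a factor configuration collapses to `b̂_a`, and the same weight
with the variable `i` left out is `b̂_a / b̂_i`. Summing, `Z_a = Σ b̂_a = 1`, `Z_i = Σ b̂_i = 1`,
and compatibility of the marginals gives `Θ_{ai}(x) = b̂_i(x) / b̂_i(x) = 1`.
-/

theorem Finset.prod_attach_eq_mul_prod_filter_ne {ι M : Type*} [DecidableEq ι] [CommMonoid M]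
    (s : Finset ι) {i : ι} (hi : i ∈ s) (f : s → M) :
    ∏ j ∈ s.attach, f j = f ⟨i, hi⟩ * ∏ j ∈ s.attach.filter (fun j => j.1 ≠ i), f j := by
  have hfilter : s.attach.filter (fun j => j.1 ≠ i) = s.attach.erase ⟨i, hi⟩ := by
    ext j
    simp [Subtype.ext_iff]
  rw [hfilter, mul_prod_erase _ _ (mem_attach s _)]

theorem Finset.div_prod_attach_mul_prod_filter_ne {ι K : Type*} [DecidableEq ι] [Field K]
    (s : Finset ι) {i : ι} (hi : i ∈ s) (b : K) {f : s → K} (hf : ∀ j, f j ≠ 0) :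
    b / (∏ j ∈ s.attach, f j) * ∏ j ∈ s.attach.filter (fun j => j.1 ≠ i), f j =
      b / f ⟨i, hi⟩ := by
  have hrest : ∏ j ∈ s.attach.filter (fun j => j.1 ≠ i), f j ≠ 0 :=
    prod_ne_zero_iff.mpr fun j _ => hf j
  rw [prod_attach_eq_mul_prod_filter_ne s hi, ← div_div, div_mul_cancel₀ _ hrest]

section ConstantMessages

set_option linter.unusedSectionVars false

variable {q : ℕ} (S : F → Finset V) (φ : V → Fin q → ℝ) {m : F → V → Fin q → ℝ}

theorem nmsg_of_forall_eq_one (hm : ∀ a i x, m a i x = 1) (i : V) (a : F) (x : Fin q) :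
    nmsg S φ m i a x = φ i x := by
  simp [nmsg, hm]

theorem Zv_of_forall_eq_one (hm : ∀ a i x, m a i x = 1) (i : V) :
    Zv S φ m i = ∑ x, φ i x := by
  simp [Zv, hm]

theorem bv_of_forall_eq_one (hm : ∀ a i x, m a i x = 1) (i : V) (x : Fin q) :
    bv S φ m i x = φ i x / ∑ x, φ i x := by
  simp [bv, Zv_of_forall_eq_one S φ hm, hm]

end ConstantMessages

theorem prescribed_beliefs_fixed_point_general
    (q : ℕ) (S : F → Finset V)
    (bhi : V → Fin q → ℝ) (bha : ∀ a : F, Config S q a → ℝ)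
    (hbhi : ∀ i x, 0 < bhi i x)
    (hsumi : ∀ i, ∑ x, bhi i x = 1)
    (hsuma : ∀ a, ∑ y : Config S q a, bha a y = 1)
    (hcompat : ∀ a i (hi : i ∈ S a) (x : Fin q),
      ∑ y ∈ univ.filter (fun y : Config S q a => y ⟨i, hi⟩ = x), bha a y = bhi i x)
    (φ : V → Fin q → ℝ) (hφ : φ = bhi)
    (ψ : ∀ a : F, Config S q a → ℝ)
    (hψ : ∀ a y, ψ a y = bha a y / ∏ j ∈ (S a).attach, bhi j.1 (y j))
    (m : F → V → Fin q → ℝ) (hm : ∀ a i x, m a i x = 1) :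
    (∀ a i (hi : i ∈ S a) (x : Fin q),
      theta S φ ψ m a i hi x = 1 ∧ theta S φ ψ m a i hi x = m a i x) ∧
    (∀ i, Zv S φ m i = 1) ∧ (∀ a, Zf S φ ψ m a = 1) ∧
    (∀ i x, bv S φ m i x = bhi i x) ∧
    (∀ (a : F) (y : Config S q a), bfn S φ ψ m a y = bha a y) := by
  subst φ
  have hbhi_ne : ∀ i x, bhi i x ≠ 0 := fun i x => (hbhi i x).ne'
  have hweight : ∀ a y, ψ a y * ∏ j ∈ (S a).attach, bhi j.1 (y j) = bha a y := fun a y => by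
    rw [hψ, div_mul_cancel₀ _ (prod_ne_zero_iff.mpr fun j _ => hbhi_ne j.1 (y j))]
  have hZf : ∀ a, Zf S bhi ψ m a = 1 := fun a => by
    simp only [Zf, nmsg_of_forall_eq_one S bhi hm, hweight, hsuma]
  have hθ : ∀ a i (hi : i ∈ S a) x, theta S bhi ψ m a i hi x = 1 := fun a i hi x => by
    have hcavity : ∀ y ∈ univ.filter (fun y : Config S q a => y ⟨i, hi⟩ = x),
        ψ a y * ∏ j ∈ (S a).attach.filter (fun j => j.1 ≠ i), bhi j.1 (y j) =
          bha a y / bhi i x := by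
      intro y hy
      rw [hψ, div_prod_attach_mul_prod_filter_ne (S a) hi _ fun j => hbhi_ne j.1 (y j),
        (mem_filter.mp hy).2]
    simp only [theta, nmsg_of_forall_eq_one S bhi hm]
    rw [sum_congr rfl hcavity, ← sum_div, hcompat, div_self (hbhi_ne i x)]
  refine ⟨fun a i hi x => ⟨hθ a i hi x, by rw [hθ, hm]⟩,
    fun i => by rw [Zv_of_forall_eq_one S bhi hm, hsumi],
    hZf, fun i x => by rw [bv_of_forall_eq_one S bhi hm, hsumi, div_one], fun a y => ?_⟩
  simp only [bfn, hZf, nmsg_of_forall_eq_one S bhi hm, hweight, div_one]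

/-- Prescribing a set of strictly positive compatible beliefs `b̂` and choosing
`φ_i = b̂_i`, `ψ_a = b̂_a / ∏_{i∈a} b̂_i`, the constant messages `m ≡ 1` form a BP fixed
point whose beliefs are exactly `b̂`, with normalization constants `Z_i = Z_a = 1`. -/
theorem prescribed_beliefs_fixed_point
    (q : ℕ) (hq : 1 ≤ q) (S : F → Finset V) (hS : ∀ a, (S a).Nonempty)
    (bhi : V → Fin q → ℝ) (bha : ∀ a : F, Config S q a → ℝ)
    (hbhi : ∀ i x, 0 < bhi i x) (hbha : ∀ a y, 0 < bha a y)
    (hsumi : ∀ i, ∑ x, bhi i x = 1)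
    (hsuma : ∀ a, ∑ y : Config S q a, bha a y = 1)
    (hcompat : ∀ a i (hi : i ∈ S a) (x : Fin q),
      ∑ y ∈ univ.filter (fun y : Config S q a => y ⟨i, hi⟩ = x), bha a y = bhi i x)
    (φ : V → Fin q → ℝ) (hφ : φ = bhi)
    (ψ : ∀ a : F, Config S q a → ℝ)
    (hψ : ∀ a y, ψ a y = bha a y / ∏ j ∈ (S a).attach, bhi j.1 (y j))
    (m : F → V → Fin q → ℝ) (hm : ∀ a i x, m a i x = 1) :
    (∀ a i (hi : i ∈ S a) (x : Fin q),
      theta S φ ψ m a i hi x = 1 ∧ theta S φ ψ m a i hi x = m a i x) ∧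
    (∀ i, Zv S φ m i = 1) ∧ (∀ a, Zf S φ ψ m a = 1) ∧
    (∀ i x, bv S φ m i x = bhi i x) ∧
    (∀ (a : F) (y : Config S q a), bfn S φ ψ m a y = bha a y) :=
  prescribed_beliefs_fixed_point_general q S bhi bha hbhi hsumi hsuma hcompat φ hφ ψ hψ m hm
end

section
/- Let a ∈ F and i ≠ j both in a. Let x ∈ ℝ^q satisfy ⟨x⟩_{b_i} = 0, and define y ∈ ℝ^q by y_l·b_j(l) = Σ_k x_k·b_i(k)·B^{(iaj)}_{kl} for each l. Then ⟨y⟩_{b_j} = 0 and ‖y‖²_{b_j} ≤ μ₂^{(iaj)}·‖x‖²_{b_i}. -/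
open Finset

variable {V F : Type*} [Fintype V] [DecidableEq V] [Fintype F] [DecidableEq F]

/-- The conditional-belief matrix `B^{(iaj)}`, with entries
`B^{(iaj)}_{kl} = (1/b_i(k)) Σ_{x_a : x_i = k, x_j = l} b_a(x_a)`. -/
noncomputable def Bmat (S : F → Finset V) {q : ℕ} (bv : V → Fin q → ℝ)
    (bf : ∀ a : F, Config S q a → ℝ) (a : F) (i j : V) :
    Matrix (Fin q) (Fin q) ℝ :=
  Matrix.of fun k l => (1 / bv i k) *
    ∑ y ∈ univ.filter (fun y : Config S q a =>
        ∀ v : {v : V // v ∈ S a}, (v.1 = i → y v = k) ∧ (v.1 = j → y v = l)),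
      bf a y

/-- The combined stochastic kernel `K^{(iaj)} = B^{(iaj)} B^{(jai)}`. -/
noncomputable def Kmat (S : F → Finset V) {q : ℕ} (bv : V → Fin q → ℝ)
    (bf : ∀ a : F, Config S q a → ℝ) (a : F) (i j : V) :
    Matrix (Fin q) (Fin q) ℝ :=
  Bmat S bv bf a i j * Bmat S bv bf a j i

/-- `μ₂^{(iaj)}`: the second eigenvalue of `K^{(iaj)}`, as the supremum of the Rayleigh
quotient over nonzero vectors with zero `b_i`-mean. -/
noncomputable def mu2 (S : F → Finset V) {q : ℕ} (bv : V → Fin q → ℝ)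
    (bf : ∀ a : F, Config S q a → ℝ) (a : F) (i j : V) : ℝ :=
  sSup {r : ℝ | ∃ x : Fin q → ℝ, x ≠ 0 ∧ (∑ k, x k * bv i k) = 0 ∧
    r = (∑ k, ∑ l, x k * x l * Kmat S bv bf a i j k l * bv i k) /
        (∑ k, x k ^ 2 * bv i k)}

/-- One-step contraction lemma: if `⟨x⟩_{b_i} = 0` and `y` is defined by
`y_l b_j(l) = Σ_k x_k b_i(k) B^{(iaj)}_{kl}`, then `⟨y⟩_{b_j} = 0` and
`‖y‖²_{b_j} ≤ μ₂^{(iaj)} ‖x‖²_{b_i}`. -/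
theorem one_step_contraction
    (q : ℕ) (hq : 2 ≤ q) (S : F → Finset V) (hcard : ∀ a, 2 ≤ (S a).card)
    (bv : V → Fin q → ℝ) (bf : ∀ a : F, Config S q a → ℝ)
    (hbv : ∀ i x, 0 < bv i x) (hbf : ∀ a y, 0 < bf a y)
    (hsumv : ∀ i, ∑ x, bv i x = 1)
    (hsumf : ∀ a, ∑ y : Config S q a, bf a y = 1)
    (hcompat : ∀ a i (hi : i ∈ S a) (k : Fin q),
      ∑ y ∈ univ.filter (fun y : Config S q a => y ⟨i, hi⟩ = k), bf a y = bv i k)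
    (a : F) (i j : V) (hi : i ∈ S a) (hj : j ∈ S a) (hij : i ≠ j)
    (x y : Fin q → ℝ)
    (hx : ∑ k, x k * bv i k = 0)
    (hy : ∀ l, y l * bv j l = ∑ k, x k * bv i k * Bmat S bv bf a i j k l) :
    (∑ l, y l * bv j l = 0) ∧
    (∑ l, y l ^ 2 * bv j l) ≤ mu2 S bv bf a i j * (∑ k, x k ^ 2 * bv i k) := by
  classical
  have hbvi : ∀ k, bv i k ≠ 0 := fun k => (hbv i k).ne'
  have hbvj : ∀ l, bv j l ≠ 0 := fun l => (hbv j l).ne'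
  set C : Fin q → Fin q → ℝ := fun k l =>
    ∑ z ∈ univ.filter (fun z : Config S q a => z ⟨i, hi⟩ = k ∧ z ⟨j, hj⟩ = l), bf a z with hCdef
  have hCnonneg : ∀ k l, 0 ≤ C k l := fun k l =>
    Finset.sum_nonneg fun z _ => (hbf a z).le
  -- filter identification, parametric in the two vertices
  have hfilter : ∀ (i' j' : V) (hi' : i' ∈ S a) (hj' : j' ∈ S a) (k l : Fin q),
      (univ.filter (fun z : Config S q a =>
        ∀ v : {v : V // v ∈ S a}, (v.1 = i' → z v = k) ∧ (v.1 = j' → z v = l)))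
      = univ.filter (fun z : Config S q a => z ⟨i', hi'⟩ = k ∧ z ⟨j', hj'⟩ = l) := by
    intro i' j' hi' hj' k l
    apply Finset.filter_congr
    intro z _
    constructor
    · intro h
      exact ⟨(h ⟨i', hi'⟩).1 rfl, (h ⟨j', hj'⟩).2 rfl⟩
    · rintro ⟨h1, h2⟩ v
      refine ⟨fun hv => ?_, fun hv => ?_⟩
      · have : v = ⟨i', hi'⟩ := Subtype.ext hv
        rw [this]; exact h1
      · have : v = ⟨j', hj'⟩ := Subtype.ext hv
        rw [this]; exact h2
  have hB : ∀ k l, bv i k * Bmat S bv bf a i j k l = C k l := by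
    intro k l
    simp only [Bmat, Matrix.of_apply, hfilter i j hi hj k l]
    rw [← mul_assoc, mul_one_div, div_self (hbvi k), one_mul]
  have hBji : ∀ k l, Bmat S bv bf a j i l k = C k l / bv j l := by
    intro k l
    simp only [Bmat, Matrix.of_apply, hfilter j i hj hi l k]
    rw [mul_comm, mul_one_div]
    congr 1
    apply Finset.sum_congr _ (fun _ _ => rfl)
    apply Finset.filter_congr
    intro z _
    simp [and_comm]
  have hrow : ∀ k, ∑ l, C k l = bv i k := by
    intro k
    rw [← hcompat a i hi k]
    rw [← Finset.sum_fiberwise (univ.filter (fun z : Config S q a => z ⟨i, hi⟩ = k))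
      (fun z => z ⟨j, hj⟩) (bf a)]
    refine Finset.sum_congr rfl fun l _ => ?_
    rw [hCdef]
    rw [Finset.filter_filter]
  have hcol : ∀ l, ∑ k, C k l = bv j l := by
    intro l
    rw [← hcompat a j hj l]
    rw [← Finset.sum_fiberwise (univ.filter (fun z : Config S q a => z ⟨j, hj⟩ = l))
      (fun z => z ⟨i, hi⟩) (bf a)]
    refine Finset.sum_congr rfl fun k _ => ?_
    rw [hCdef, Finset.filter_filter]
    apply Finset.sum_congr _ (fun _ _ => rfl)
    apply Finset.filter_congr
    intro z _
    simp [and_comm]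
  have hyC : ∀ l, y l * bv j l = ∑ k, x k * C k l := by
    intro l
    rw [hy l]
    refine Finset.sum_congr rfl fun k _ => ?_
    rw [mul_assoc, hB]
  have part1 : ∑ l, y l * bv j l = 0 := by
    calc ∑ l, y l * bv j l = ∑ l, ∑ k, x k * C k l := by simp_rw [hyC]
      _ = ∑ k, ∑ l, x k * C k l := Finset.sum_comm
      _ = ∑ k, x k * bv i k := by simp_rw [← Finset.mul_sum, hrow]
      _ = 0 := hx
  have hK : ∀ k l, Kmat S bv bf a i j k l * bv i k = ∑ m, C k m * C l m / bv j m := by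
    intro k l
    simp only [Kmat, Matrix.mul_apply]
    rw [Finset.sum_mul]
    refine Finset.sum_congr rfl fun m _ => ?_
    rw [hBji l m, ← hB k m]
    ring
  have hnum : ∀ x' : Fin q → ℝ,
      (∑ k, ∑ l, x' k * x' l * Kmat S bv bf a i j k l * bv i k)
      = ∑ m, (∑ k, x' k * C k m)^2 / bv j m := by
    intro x'
    calc ∑ k, ∑ l, x' k * x' l * Kmat S bv bf a i j k l * bv i k
        = ∑ k, ∑ l, ∑ m, x' k * C k m * (x' l * C l m) / bv j m := by
          refine Finset.sum_congr rfl fun k _ => Finset.sum_congr rfl fun l _ => ?_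
          rw [mul_assoc, hK, Finset.mul_sum]
          refine Finset.sum_congr rfl fun m _ => ?_
          ring
      _ = ∑ k, ∑ m, ∑ l, x' k * C k m * (x' l * C l m) / bv j m :=
          Finset.sum_congr rfl fun k _ => Finset.sum_comm
      _ = ∑ m, ∑ k, ∑ l, x' k * C k m * (x' l * C l m) / bv j m := Finset.sum_comm
      _ = ∑ m, (∑ k, x' k * C k m)^2 / bv j m := by
          refine Finset.sum_congr rfl fun m _ => ?_
          rw [sq, Finset.sum_mul_sum, Finset.sum_div]
          refine Finset.sum_congr rfl fun k _ => ?_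
          rw [Finset.sum_div]
  have hbound : ∀ x' : Fin q → ℝ,
      (∑ k, ∑ l, x' k * x' l * Kmat S bv bf a i j k l * bv i k)
      ≤ ∑ k, x' k ^ 2 * bv i k := by
    intro x'
    rw [hnum x']
    have step1 : ∀ m, (∑ k, x' k * C k m)^2 / bv j m ≤ ∑ k, x' k ^ 2 * C k m := by
      intro m
      rw [div_le_iff₀ (hbv j m)]
      have hcs := Finset.sum_mul_sq_le_sq_mul_sq univ
        (fun k => Real.sqrt (C k m)) (fun k => x' k * Real.sqrt (C k m))
      have e1 : ∀ k, Real.sqrt (C k m) * (x' k * Real.sqrt (C k m)) = x' k * C k m := by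
        intro k
        have h1 : Real.sqrt (C k m) * Real.sqrt (C k m) = C k m :=
          Real.mul_self_sqrt (hCnonneg k m)
        rw [mul_comm (Real.sqrt (C k m)), mul_assoc, h1]
      have e2 : ∀ k, Real.sqrt (C k m) ^ 2 = C k m := fun k => Real.sq_sqrt (hCnonneg k m)
      have e3 : ∀ k, (x' k * Real.sqrt (C k m)) ^ 2 = x' k ^ 2 * C k m := by
        intro k; rw [mul_pow, e2]
      simp only [e1, e2, e3] at hcs
      calc (∑ k, x' k * C k m) ^ 2 ≤ (∑ k, C k m) * ∑ k, x' k ^ 2 * C k m := hcs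
        _ = (∑ k, x' k ^ 2 * C k m) * bv j m := by rw [hcol, mul_comm]
    calc ∑ m, (∑ k, x' k * C k m)^2 / bv j m ≤ ∑ m, ∑ k, x' k ^ 2 * C k m :=
          Finset.sum_le_sum fun m _ => step1 m
      _ = ∑ k, ∑ m, x' k ^ 2 * C k m := Finset.sum_comm
      _ = ∑ k, x' k ^ 2 * bv i k := by simp_rw [← Finset.mul_sum, hrow]
  refine ⟨part1, ?_⟩
  by_cases hx0 : x = 0
  · have hy0 : ∀ l, y l = 0 := by
      intro l
      have := hyC l
      simp [hx0] at this
      rcases this with h | h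
      · exact h
      · exact absurd h (hbvj l)
    have h1 : ∑ l, y l ^ 2 * bv j l = 0 := by simp [hy0]
    have h2 : ∑ k, x k ^ 2 * bv i k = 0 := by simp [hx0]
    rw [h1, h2, mul_zero]
  · -- x ≠ 0
    have hDpos : 0 < ∑ k, x k ^ 2 * bv i k := by
      obtain ⟨k0, hk0⟩ := Function.ne_iff.mp hx0
      refine Finset.sum_pos' (fun k _ => mul_nonneg (sq_nonneg _) (hbv i k).le)
        ⟨k0, Finset.mem_univ _, mul_pos (sq_pos_of_ne_zero hk0) (hbv i k0)⟩
    have hLHS : (∑ l, y l ^ 2 * bv j l)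
        = ∑ k, ∑ l, x k * x l * Kmat S bv bf a i j k l * bv i k := by
      rw [hnum x]
      refine Finset.sum_congr rfl fun m _ => ?_
      rw [← hyC m, eq_div_iff (hbvj m)]
      ring
    set R := {r : ℝ | ∃ x' : Fin q → ℝ, x' ≠ 0 ∧ (∑ k, x' k * bv i k) = 0 ∧
      r = (∑ k, ∑ l, x' k * x' l * Kmat S bv bf a i j k l * bv i k) /
          (∑ k, x' k ^ 2 * bv i k)} with hR
    have hbdd : BddAbove R := by
      refine ⟨1, ?_⟩
      rintro r ⟨x', hx'0, _, rfl⟩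
      have hD'pos : 0 < ∑ k, x' k ^ 2 * bv i k := by
        obtain ⟨k0, hk0⟩ := Function.ne_iff.mp hx'0
        refine Finset.sum_pos' (fun k _ => mul_nonneg (sq_nonneg _) (hbv i k).le)
          ⟨k0, Finset.mem_univ _, mul_pos (sq_pos_of_ne_zero hk0) (hbv i k0)⟩
      rw [div_le_one hD'pos]
      exact hbound x'
    have hmem : (∑ k, ∑ l, x k * x l * Kmat S bv bf a i j k l * bv i k) /
        (∑ k, x k ^ 2 * bv i k) ∈ R := ⟨x, hx0, hx, rfl⟩
    have hle := le_csSup hbdd hmem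
    rw [hLHS, ← div_le_iff₀ hDpos]
    exact hle
end

section
/- Let (a,i) and (a',j) be edges in E and n ≥ 1 such that the set Γ of directed paths of length n from (a,i) to (a',j) in the oriented line graph is nonempty, and let B^{(n)} = (1/|Γ|) Σ_{γ∈Γ} B^γ be the averaged kernel. If x ∈ ℝ^q satisfies ⟨x⟩_{b_i} = 0 and y ∈ ℝ^q is defined by y_l·b_j(l) = Σ_k x_k·b_i(k)·B^{(n)}_{kl} for each l, then ‖y‖_{b_j} ≤ μ₂^n·‖x‖_{b_i}. -/
/-!
Write `T_M x` for the `b_j`-density of the signed measure `(x · b_i) M`, so that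
`y = T_{B⁽ⁿ⁾} x`. Detailed balance `b_i(k) B^{(iaj)}_{kl} = b_j(l) B^{(jai)}_{lk}` gives
`T_{B^{(iaj)}} x = B^{(jai)} x` and `‖T_{B^{(iaj)}} x‖²_{b_j} = ⟨x, K^{(iaj)} x⟩_{b_i}`, so one step
shrinks mean-zero vectors by `√μ₂^{(iaj)} ≤ μ₂`. Row-stochasticity keeps the mean zero and
`T_{MN} = T_N ∘ T_M`, so along a path of length `n` the factors multiply to `μ₂ⁿ`. As `T_M x` is
linear in `M`, the triangle inequality for the weighted norm passes the bound to the average over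
paths.
-/

open Finset

variable {V F : Type*} [Fintype V] [DecidableEq V] [Fintype F] [DecidableEq F]

/-- The 0-1 adjacency matrix `A` of the oriented line graph `L(G)`:
`A_{(a,i),(a',j)} = 1` iff `j ∈ a ∩ a'`, `j ≠ i` and `a' ≠ a`. -/
noncomputable def Amat (S : F → Finset V) : Matrix (F × V) (F × V) ℝ :=
  Matrix.of fun e e' =>
    if e'.2 ∈ S e.1 ∧ e'.2 ∈ S e'.1 ∧ e'.2 ≠ e.2 ∧ e'.1 ≠ e.1 then 1 else 0

/-- Directed paths of length `n` from `e` to `e'` in the oriented line graph. -/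
def pathSet (S : F → Finset V) (n : ℕ) (e e' : F × V) :
    Finset (Fin (n + 1) → F × V) :=
  univ.filter (fun γ => γ 0 = e ∧ γ (Fin.last n) = e' ∧
    ∀ t : Fin n,
      (γ t.succ).2 ∈ S (γ t.castSucc).1 ∧ (γ t.succ).2 ∈ S (γ t.succ).1 ∧
      (γ t.succ).2 ≠ (γ t.castSucc).2 ∧ (γ t.succ).1 ≠ (γ t.castSucc).1)

/-- The stochastic kernel of a path: `B^γ = B^{(i_0 a_0 i_1)} ⋯ B^{(i_{n-1} a_{n-1} i_n)}`. -/
noncomputable def pathKernel (S : F → Finset V) {q : ℕ} (bv : V → Fin q → ℝ)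
    (bf : ∀ a : F, Config S q a → ℝ) {n : ℕ} (γ : Fin (n + 1) → F × V) :
    Matrix (Fin q) (Fin q) ℝ :=
  (List.ofFn fun t : Fin n =>
    Bmat S bv bf (γ t.castSucc).1 (γ t.castSucc).2 (γ t.succ).2).prod

/-- `μ₂ = max_{(iaj)} √(μ₂^{(iaj)})`, the maximum over all triples `(i,a,j)` with
`i ≠ j` both in `a`. -/
noncomputable def mu2max (S : F → Finset V) {q : ℕ} (bv : V → Fin q → ℝ)
    (bf : ∀ a : F, Config S q a → ℝ) : ℝ :=
  sSup {r : ℝ | ∃ (a : F) (i j : V), i ∈ S a ∧ j ∈ S a ∧ i ≠ j ∧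
    r = Real.sqrt (mu2 S bv bf a i j)}

open scoped Matrix

set_option linter.unusedSectionVars false

section WeightedTransport

variable {ι κ ν σ : Type*} [Fintype ι] [Fintype κ] [Fintype ν]

noncomputable def weightedNorm (p x : ι → ℝ) : ℝ := √(∑ k, x k ^ 2 * p k)

lemma weightedNorm_eq_norm {p : ι → ℝ} (hp : ∀ k, 0 ≤ p k) (x : ι → ℝ) :
    weightedNorm p x = ‖WithLp.toLp 2 (fun k => √(p k) * x k)‖ := by
  simp only [weightedNorm, EuclideanSpace.norm_eq, Real.norm_eq_abs, sq_abs, mul_pow,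
    Real.sq_sqrt (hp _), mul_comm (p _)]

lemma weightedNorm_smul_sum_le {p : ι → ℝ} (hp : ∀ k, 0 ≤ p k) {t : ℝ} (ht : 0 ≤ t)
    (s : Finset σ) (v : σ → ι → ℝ) :
    weightedNorm p (t • ∑ γ ∈ s, v γ) ≤ t * ∑ γ ∈ s, weightedNorm p (v γ) := by
  have hv : (fun k => √(p k) * (t • ∑ γ ∈ s, v γ) k) =
      t • ∑ γ ∈ s, fun k => √(p k) * v γ k := by
    ext k
    simp only [Pi.smul_apply, Finset.sum_apply, smul_eq_mul, Finset.mul_sum]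
    exact Finset.sum_congr rfl fun _ _ => by ring
  simp only [weightedNorm_eq_norm hp, hv, WithLp.toLp_smul, WithLp.toLp_sum, norm_smul,
    Real.norm_of_nonneg ht]
  exact mul_le_mul_of_nonneg_left (norm_sum_le _ _) ht

/-- The density with respect to `r` of the image under `M` of the signed measure `x • p`. -/
noncomputable def transportDensity (p : ι → ℝ) (r : κ → ℝ) (M : Matrix ι κ ℝ)
    (x : ι → ℝ) : κ → ℝ :=
  fun l => (r l)⁻¹ * ∑ k, x k * p k * M k l

variable {p : ι → ℝ} {r : κ → ℝ} {s : ν → ℝ}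

lemma transportDensity_mul_weight (hr : ∀ l, r l ≠ 0) (M : Matrix ι κ ℝ) (x : ι → ℝ)
    (l : κ) : transportDensity p r M x l * r l = ∑ k, x k * p k * M k l := by
  rw [transportDensity, mul_comm, mul_inv_cancel_left₀ (hr l)]

lemma sum_transportDensity_mul_weight (hr : ∀ l, r l ≠ 0) {M : Matrix ι κ ℝ}
    (hM : ∀ k, ∑ l, M k l = 1) (x : ι → ℝ) :
    ∑ l, transportDensity p r M x l * r l = ∑ k, x k * p k := by
  simp only [transportDensity_mul_weight hr, Finset.sum_comm (γ := κ), ← Finset.mul_sum, hM,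
    mul_one]

lemma transportDensity_mul (hr : ∀ l, r l ≠ 0) (M : Matrix ι κ ℝ) (N : Matrix κ ν ℝ)
    (x : ι → ℝ) :
    transportDensity p s (M * N) x = transportDensity r s N (transportDensity p r M x) := by
  ext m
  change (s m)⁻¹ * _ = (s m)⁻¹ * ∑ l, transportDensity p r M x l * r l * N l m
  simp only [transportDensity_mul_weight hr, Matrix.mul_apply, Finset.mul_sum, Finset.sum_mul,
    mul_assoc]
  rw [Finset.sum_comm]

lemma transportDensity_one [DecidableEq ι] (hp : ∀ k, p k ≠ 0) (x : ι → ℝ) :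
    transportDensity p p 1 x = x := by
  ext l
  simp [transportDensity, Matrix.one_apply, mul_comm (x l), inv_mul_cancel_left₀ (hp l)]

lemma transportDensity_smul_sum (t : ℝ) (Γ : Finset σ) (M : σ → Matrix ι κ ℝ)
    (x : ι → ℝ) :
    transportDensity p r (t • ∑ γ ∈ Γ, M γ) x =
      t • ∑ γ ∈ Γ, transportDensity p r (M γ) x := by
  ext l
  simp only [transportDensity, Matrix.smul_apply, Matrix.sum_apply, Pi.smul_apply,
    Finset.sum_apply, smul_eq_mul, Finset.mul_sum]
  rw [Finset.sum_comm]
  exact Finset.sum_congr rfl fun _ _ => Finset.sum_congr rfl fun _ _ => by ring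

section ReversiblePair

variable {M : Matrix ι κ ℝ} {N : Matrix κ ι ℝ}

lemma transportDensity_eq_mulVec (hr : ∀ l, r l ≠ 0) (hMN : ∀ k l, p k * M k l = r l * N l k)
    (x : ι → ℝ) : transportDensity p r M x = N *ᵥ x := by
  ext l
  simp only [transportDensity, Matrix.mulVec, dotProduct, mul_assoc, hMN, Finset.mul_sum]
  exact Finset.sum_congr rfl fun k _ => by
    rw [mul_left_comm, inv_mul_cancel_left₀ (hr l), mul_comm]

lemma sum_sq_transportDensity_mul_weight (hr : ∀ l, r l ≠ 0)
    (hMN : ∀ k l, p k * M k l = r l * N l k) (x : ι → ℝ) :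
    ∑ l, transportDensity p r M x l ^ 2 * r l = ∑ k, ∑ m, x k * x m * (M * N) k m * p k := by
  have hsq : ∀ l, transportDensity p r M x l ^ 2 * r l =
      ∑ k, ∑ m, x k * p k * M k l * (N l m * x m) := fun l => by
    rw [sq, mul_right_comm, transportDensity_mul_weight hr, transportDensity_eq_mulVec hr hMN]
    exact Finset.sum_mul_sum _ _ _ _
  simp only [hsq, Matrix.mul_apply, Finset.mul_sum, Finset.sum_mul]
  rw [Finset.sum_comm]
  refine Finset.sum_congr rfl fun k _ => ?_
  rw [Finset.sum_comm]
  exact Finset.sum_congr rfl fun m _ => Finset.sum_congr rfl fun l _ => by ring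

lemma sum_sq_transportDensity_mul_weight_le (hr : ∀ l, 0 < r l)
    (hMN : ∀ k l, p k * M k l = r l * N l k) (hM : ∀ k, ∑ l, M k l = 1)
    (hN₀ : ∀ l k, 0 ≤ N l k) (hN : ∀ l, ∑ k, N l k = 1) (x : ι → ℝ) :
    ∑ l, transportDensity p r M x l ^ 2 * r l ≤ ∑ k, x k ^ 2 * p k := by
  have hr₀ : ∀ l, r l ≠ 0 := fun l => (hr l).ne'
  have jensen : ∀ l, transportDensity p r M x l ^ 2 ≤ ∑ k, N l k * x k ^ 2 := fun l => by
    rw [transportDensity_eq_mulVec hr₀ hMN]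
    have := Finset.sum_sq_le_sum_mul_sum_of_sq_le_mul univ
      (fun k _ => hN₀ l k) (fun k _ => mul_nonneg (hN₀ l k) (sq_nonneg (x k)))
      (fun k _ => (by ring : (N l k * x k) ^ 2 = N l k * (N l k * x k ^ 2)).le)
    rwa [hN, one_mul] at this
  calc ∑ l, transportDensity p r M x l ^ 2 * r l
      ≤ ∑ l, (∑ k, N l k * x k ^ 2) * r l :=
        Finset.sum_le_sum fun l _ => mul_le_mul_of_nonneg_right (jensen l) (hr l).le
    _ = ∑ k, x k ^ 2 * p k * ∑ l, M k l := by
        simp only [Finset.sum_mul, Finset.mul_sum]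
        rw [Finset.sum_comm]
        refine Finset.sum_congr rfl fun k _ => Finset.sum_congr rfl fun l _ => ?_
        rw [mul_assoc (x k ^ 2), hMN]; ring
    _ = ∑ k, x k ^ 2 * p k := by simp only [hM, mul_one]

end ReversiblePair

def ContractsMeanZero (p : ι → ℝ) (r : κ → ℝ) (c : ℝ) (M : Matrix ι κ ℝ) : Prop :=
  ∀ x, ∑ k, x k * p k = 0 → weightedNorm r (transportDensity p r M x) ≤ c * weightedNorm p x

namespace ContractsMeanZero

variable {c d : ℝ} {M : Matrix ι κ ℝ}

lemma one [DecidableEq ι] (hp : ∀ k, p k ≠ 0) : ContractsMeanZero p p 1 1 := fun x _ => by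
  rw [transportDensity_one hp, one_mul]

lemma mono (h : ContractsMeanZero p r c M) (hcd : c ≤ d) : ContractsMeanZero p r d M :=
  fun x hx => (h x hx).trans (mul_le_mul_of_nonneg_right hcd (Real.sqrt_nonneg _))

lemma mul {N : Matrix κ ν ℝ} (hM : ContractsMeanZero p r c M) (hN : ContractsMeanZero r s d N)
    (hr : ∀ l, r l ≠ 0) (hM₁ : ∀ k, ∑ l, M k l = 1) (hd : 0 ≤ d) :
    ContractsMeanZero p s (c * d) (M * N) := fun x hx =>
  calc weightedNorm s (transportDensity p s (M * N) x)
      ≤ d * weightedNorm r (transportDensity p r M x) := by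
        rw [transportDensity_mul hr]
        exact hN _ (by rwa [sum_transportDensity_mul_weight hr hM₁])
    _ ≤ d * (c * weightedNorm p x) := mul_le_mul_of_nonneg_left (hM x hx) hd
    _ = c * d * weightedNorm p x := by ring

lemma average {Γ : Finset σ} {M : σ → Matrix ι κ ℝ} (hr : ∀ l, 0 ≤ r l) (hc : 0 ≤ c)
    (h : ∀ γ ∈ Γ, ContractsMeanZero p r c (M γ)) :
    ContractsMeanZero p r c ((#Γ : ℝ)⁻¹ • ∑ γ ∈ Γ, M γ) := fun x hx =>
  calc weightedNorm r (transportDensity p r ((#Γ : ℝ)⁻¹ • ∑ γ ∈ Γ, M γ) x)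
      ≤ (#Γ : ℝ)⁻¹ * ∑ γ ∈ Γ, weightedNorm r (transportDensity p r (M γ) x) := by
        rw [transportDensity_smul_sum]
        exact weightedNorm_smul_sum_le hr (by positivity) _ _
    _ ≤ (#Γ : ℝ)⁻¹ * ∑ γ ∈ Γ, c * weightedNorm p x := by
        gcongr with γ hγ
        exact h γ hγ x hx
    _ = ((#Γ : ℝ)⁻¹ * #Γ) * (c * weightedNorm p x) := by
        rw [Finset.sum_const, nsmul_eq_mul, mul_assoc]
    _ ≤ c * weightedNorm p x :=
        mul_le_of_le_one_left (mul_nonneg hc (Real.sqrt_nonneg _)) inv_mul_le_one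

end ContractsMeanZero

end WeightedTransport

section BeliefPropagation

variable {q : ℕ} {S : F → Finset V} {bv : V → Fin q → ℝ}
  {bf : ∀ a : F, Config S q a → ℝ}

lemma Bmat_nonneg (hbv : ∀ i k, 0 ≤ bv i k) (hbf : ∀ a y, 0 ≤ bf a y) (a : F) (i j : V)
    (k l : Fin q) : 0 ≤ Bmat S bv bf a i j k l :=
  mul_nonneg (one_div_nonneg.mpr (hbv i k)) (Finset.sum_nonneg fun y _ => hbf a y)

lemma weight_mul_Bmat_comm (hbv : ∀ i k, bv i k ≠ 0) (a : F) (i j : V) (k l : Fin q) :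
    bv i k * Bmat S bv bf a i j k l = bv j l * Bmat S bv bf a j i l k := by
  simp only [Bmat, Matrix.of_apply, one_div, mul_inv_cancel_left₀ (hbv _ _)]
  exact Finset.sum_congr (Finset.filter_congr fun _ _ => forall_congr' fun _ => and_comm)
    fun _ _ => rfl

lemma filter_config_eq_filter_filter (a : F) {i j : V} (hi : i ∈ S a) (hj : j ∈ S a)
    (k l : Fin q) :
    univ.filter (fun y : Config S q a =>
        ∀ v : {v : V // v ∈ S a}, (v.1 = i → y v = k) ∧ (v.1 = j → y v = l)) =
      (univ.filter fun y : Config S q a => y ⟨i, hi⟩ = k).filter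
        fun y => y ⟨j, hj⟩ = l := by
  rw [Finset.filter_filter]
  refine Finset.filter_congr fun y _ =>
    ⟨fun h => ⟨(h ⟨i, hi⟩).1 rfl, (h ⟨j, hj⟩).2 rfl⟩, ?_⟩
  rintro ⟨hik, hjl⟩ ⟨v, _⟩
  exact ⟨by rintro rfl; exact hik, by rintro rfl; exact hjl⟩

lemma sum_Bmat_row (hbv : ∀ i k, bv i k ≠ 0)
    (hcompat : ∀ a i (hi : i ∈ S a) (k : Fin q),
      ∑ y ∈ univ.filter (fun y : Config S q a => y ⟨i, hi⟩ = k), bf a y = bv i k)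
    {a : F} {i j : V} (hi : i ∈ S a) (hj : j ∈ S a) (k : Fin q) :
    ∑ l, Bmat S bv bf a i j k l = 1 := by
  simp only [Bmat, Matrix.of_apply, ← Finset.mul_sum, filter_config_eq_filter_filter a hi hj]
  rw [Finset.sum_fiberwise_of_maps_to (fun _ _ => mem_univ _), hcompat a i hi k,
    one_div_mul_cancel (hbv i k)]

lemma Bmat_contractsMeanZero (hbv : ∀ i k, 0 < bv i k) (hbf : ∀ a y, 0 ≤ bf a y)
    (hcompat : ∀ a i (hi : i ∈ S a) (k : Fin q),
      ∑ y ∈ univ.filter (fun y : Config S q a => y ⟨i, hi⟩ = k), bf a y = bv i k)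
    {a : F} {i j : V} (hi : i ∈ S a) (hj : j ∈ S a) :
    ContractsMeanZero (bv i) (bv j) √(mu2 S bv bf a i j) (Bmat S bv bf a i j) := by
  have hbv₀ : ∀ i k, bv i k ≠ 0 := fun i k => (hbv i k).ne'
  have hbalance := weight_mul_Bmat_comm (bf := bf) hbv₀ a i j
  have hcontr : ∀ x, ∑ l, transportDensity (bv i) (bv j) (Bmat S bv bf a i j) x l ^ 2 * bv j l
      ≤ ∑ k, x k ^ 2 * bv i k :=
    sum_sq_transportDensity_mul_weight_le (hbv j) hbalance (sum_Bmat_row hbv₀ hcompat hi hj)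
      (Bmat_nonneg (fun i k => (hbv i k).le) hbf a j i) (sum_Bmat_row hbv₀ hcompat hj hi)
  -- needed for `le_csSup`: the `sSup` of an unbounded set is the junk value `0`
  have hbdd : BddAbove {r : ℝ | ∃ x : Fin q → ℝ, x ≠ 0 ∧ (∑ k, x k * bv i k) = 0 ∧
      r = (∑ k, ∑ l, x k * x l * Kmat S bv bf a i j k l * bv i k) /
        (∑ k, x k ^ 2 * bv i k)} := by
    refine ⟨1, ?_⟩
    rintro r ⟨x, -, -, rfl⟩
    rw [Kmat, ← sum_sq_transportDensity_mul_weight (hbv₀ j) hbalance]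
    exact div_le_one_of_le₀ (hcontr x)
      (Finset.sum_nonneg fun k _ => mul_nonneg (sq_nonneg _) (hbv i k).le)
  intro x hx
  rcases eq_or_ne x 0 with rfl | hx₀
  · simp [weightedNorm, transportDensity]
  have hden : 0 < ∑ k, x k ^ 2 * bv i k := by
    obtain ⟨k, hk⟩ := Function.ne_iff.mp hx₀
    exact Finset.sum_pos' (fun k _ => mul_nonneg (sq_nonneg _) (hbv i k).le)
      ⟨k, mem_univ k, mul_pos (sq_pos_of_ne_zero hk) (hbv i k)⟩
  have hrayleigh := le_csSup hbdd ⟨x, hx₀, hx, rfl⟩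
  rw [Kmat, ← sum_sq_transportDensity_mul_weight (hbv₀ j) hbalance, div_le_iff₀ hden] at hrayleigh
  rw [weightedNorm, weightedNorm, ← Real.sqrt_mul' _ hden.le]
  exact Real.sqrt_le_sqrt hrayleigh

lemma sqrt_mu2_le_mu2max {a : F} {i j : V} (hi : i ∈ S a) (hj : j ∈ S a) (hij : i ≠ j) :
    √(mu2 S bv bf a i j) ≤ mu2max S bv bf := by
  have hfin : Set.Finite {r : ℝ | ∃ (a : F) (i j : V), i ∈ S a ∧ j ∈ S a ∧ i ≠ j ∧
      r = √(mu2 S bv bf a i j)} := by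
    refine (Set.finite_range fun t : F × V × V => √(mu2 S bv bf t.1 t.2.1 t.2.2)).subset ?_
    rintro _ ⟨a, i, j, -, -, -, rfl⟩
    exact ⟨(a, i, j), rfl⟩
  exact le_csSup hfin.bddAbove ⟨a, i, j, hi, hj, hij, rfl⟩

lemma mu2max_nonneg : 0 ≤ mu2max S bv bf :=
  Real.sSup_nonneg fun _ ⟨_, _, _, _, _, _, hr⟩ => hr ▸ Real.sqrt_nonneg _

lemma pathKernel_zero (γ : Fin 1 → F × V) : pathKernel S bv bf γ = 1 := rfl

lemma pathKernel_succ {n : ℕ} (γ : Fin (n + 2) → F × V) :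
    pathKernel S bv bf γ =
      Bmat S bv bf (γ 0).1 (γ 0).2 (γ 1).2 * pathKernel S bv bf (Fin.tail γ) := by
  rw [pathKernel, List.ofFn_succ, List.prod_cons]
  rfl

lemma tail_mem_pathSet {n : ℕ} {γ : Fin (n + 2) → F × V} {e e' : F × V}
    (hγ : γ ∈ pathSet S (n + 1) e e') : Fin.tail γ ∈ pathSet S n (γ 1) e' := by
  simp only [pathSet, mem_filter, mem_univ, true_and] at hγ ⊢
  obtain ⟨-, hlast, hsteps⟩ := hγ
  exact ⟨rfl, hlast, fun t => hsteps t.succ⟩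

lemma pathKernel_contractsMeanZero (hbv : ∀ i k, 0 < bv i k) (hbf : ∀ a y, 0 ≤ bf a y)
    (hcompat : ∀ a i (hi : i ∈ S a) (k : Fin q),
      ∑ y ∈ univ.filter (fun y : Config S q a => y ⟨i, hi⟩ = k), bf a y = bv i k) :
    ∀ {n : ℕ} {γ : Fin (n + 1) → F × V} {e e' : F × V},
      γ ∈ pathSet S n e e' → e.2 ∈ S e.1 →
      ContractsMeanZero (bv e.2) (bv e'.2) (mu2max S bv bf ^ n) (pathKernel S bv bf γ)
  | 0, γ, e, e', hγ, _ => by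
    simp only [pathSet, mem_filter, mem_univ, true_and] at hγ
    obtain ⟨h0, hlast, -⟩ := hγ
    obtain rfl : e = e' := h0.symm.trans hlast
    rw [pathKernel_zero, pow_zero]
    exact ContractsMeanZero.one fun k => (hbv _ k).ne'
  | n + 1, γ, e, e', hγ, he => by
    have hstep := (mem_filter.mp hγ).2.2.2 0
    obtain rfl : γ 0 = e := (mem_filter.mp hγ).2.1
    simp only [Fin.castSucc_zero, Fin.succ_zero_eq_one] at hstep
    obtain ⟨hi, hnext, hne, -⟩ := hstep
    rw [pathKernel_succ, pow_succ']
    exact ((Bmat_contractsMeanZero hbv hbf hcompat he hi).mono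
      (sqrt_mu2_le_mu2max he hi hne.symm)).mul
      (pathKernel_contractsMeanZero hbv hbf hcompat (tail_mem_pathSet hγ) hnext)
      (fun k => (hbv _ k).ne') (sum_Bmat_row (fun i k => (hbv i k).ne') hcompat he hi)
      (pow_nonneg mu2max_nonneg n)

end BeliefPropagation

theorem path_averaged_contraction_general
    (q : ℕ) (S : F → Finset V)
    (bv : V → Fin q → ℝ) (bf : ∀ a : F, Config S q a → ℝ)
    (hbv : ∀ i x, 0 < bv i x) (hbf : ∀ a y, 0 < bf a y)
    (hcompat : ∀ a i (hi : i ∈ S a) (k : Fin q),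
      ∑ y ∈ univ.filter (fun y : Config S q a => y ⟨i, hi⟩ = k), bf a y = bv i k)
    (a a' : F) (i j : V) (hi : i ∈ S a)
    (n : ℕ)
    (x y : Fin q → ℝ)
    (hx : ∑ k, x k * bv i k = 0)
    (hy : ∀ l, y l * bv j l = ∑ k, x k * bv i k *
      (((pathSet S n (a, i) (a', j)).card : ℝ)⁻¹ •
        ∑ γ ∈ pathSet S n (a, i) (a', j), pathKernel S bv bf γ) k l) :
    Real.sqrt (∑ l, y l ^ 2 * bv j l)
      ≤ mu2max S bv bf ^ n * Real.sqrt (∑ k, x k ^ 2 * bv i k) := by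
  obtain rfl : y = transportDensity (bv i) (bv j) (((pathSet S n (a, i) (a', j)).card : ℝ)⁻¹ •
      ∑ γ ∈ pathSet S n (a, i) (a', j), pathKernel S bv bf γ) x := by
    ext l
    rw [transportDensity, ← hy l, mul_comm (y l), inv_mul_cancel_left₀ (hbv j l).ne']
  exact ContractsMeanZero.average (fun l => (hbv j l).le) (pow_nonneg mu2max_nonneg n)
    (fun γ hγ => pathKernel_contractsMeanZero hbv (fun a y => (hbf a y).le) hcompat hγ hi) x hx

/-- Path-averaged contraction: if `⟨x⟩_{b_i} = 0` and `y` is the image of `x` under the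
kernel `B^{(n)}` averaged over the directed paths of length `n` from `(a,i)` to `(a',j)`,
then `‖y‖_{b_j} ≤ μ₂ⁿ ‖x‖_{b_i}`. -/
theorem path_averaged_contraction
    (q : ℕ) (hq : 2 ≤ q) (S : F → Finset V) (hcard : ∀ a, 2 ≤ (S a).card)
    (bv : V → Fin q → ℝ) (bf : ∀ a : F, Config S q a → ℝ)
    (hbv : ∀ i x, 0 < bv i x) (hbf : ∀ a y, 0 < bf a y)
    (hsumv : ∀ i, ∑ x, bv i x = 1)
    (hsumf : ∀ a, ∑ y : Config S q a, bf a y = 1)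
    (hcompat : ∀ a i (hi : i ∈ S a) (k : Fin q),
      ∑ y ∈ univ.filter (fun y : Config S q a => y ⟨i, hi⟩ = k), bf a y = bv i k)
    (a a' : F) (i j : V) (hi : i ∈ S a) (hj : j ∈ S a')
    (n : ℕ) (hn : 1 ≤ n) (hne : (pathSet S n (a, i) (a', j)).Nonempty)
    (x y : Fin q → ℝ)
    (hx : ∑ k, x k * bv i k = 0)
    (hy : ∀ l, y l * bv j l = ∑ k, x k * bv i k *
      (((pathSet S n (a, i) (a', j)).card : ℝ)⁻¹ •
        ∑ γ ∈ pathSet S n (a, i) (a', j), pathKernel S bv bf γ) k l) :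
    Real.sqrt (∑ l, y l ^ 2 * bv j l)
      ≤ mu2max S bv bf ^ n * Real.sqrt (∑ k, x k ^ 2 * bv i k) :=
  path_averaged_contraction_general q S bv bf hbv hbf hcompat a a' i j hi n x y hx hy
end

section
/- (Necessity in the homogeneous case.) Assume the system is homogeneous: all single-variable beliefs b_i are equal to a common strictly positive probability vector β on {1,…,q}, and there is a single q×q row-stochastic matrix B with B^{(iaj)} = B for all triples (i,a,j) with i ≠ j in a, where B is reversible with respect to β (β_k B_{kl} = β_l B_{lk} for all k,l). Let λ₁ be the spectral radius of A and μ₂ = √(μ₂^{(iaj)}) (the same for all triples). If every complex eigenvalue of J̃ has modulus strictly less than 1 (local stability), then λ₁·μ₂ ≤ 1; i.e., λ₁μ₂ ≤ 1 is a necessary condition for local stability. -/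
open Finset

variable {V F : Type*} [Fintype V] [DecidableEq V] [Fintype F] [DecidableEq F]

/-- The Jacobian `J̃` of the message-normalized BP update at the fixed point with beliefs
`(b_i, b_a)` (for `φ_i = b_i`, `ψ_a = b_a/∏_{i∈a} b_i`, messages ≡ 1):
`J̃_{(a,i,k),(a',j,l)} = (B^{(iaj)}_{kl} − (1/q) Σ_x B^{(iaj)}_{xl}) A_{(a,i),(a',j)}`. -/
noncomputable def Jtilde (S : F → Finset V) {q : ℕ} (bv : V → Fin q → ℝ)
    (bf : ∀ a : F, Config S q a → ℝ) :
    Matrix ((F × V) × Fin q) ((F × V) × Fin q) ℝ :=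
  Matrix.of fun p p' =>
    (Bmat S bv bf p.1.1 p.1.2 p'.1.2 p.2 p'.2
        - (1 / (q : ℝ)) * ∑ x : Fin q, Bmat S bv bf p.1.1 p.1.2 p'.1.2 x p'.2) *
      Amat S p.1 p'.1

/-- `μ` is a (complex) eigenvalue of the real square matrix `M`. -/
def IsEigenvalue {n : Type*} [Fintype n] [DecidableEq n]
    (M : Matrix n n ℝ) (μ : ℂ) : Prop :=
  ∃ v : n → ℂ, v ≠ 0 ∧ (M.map (fun t : ℝ => (t : ℂ))).mulVec v = μ • v

/-- The spectral radius of a real square matrix: the supremum of the moduli of its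
complex eigenvalues. -/
noncomputable def specRad {n : Type*} [Fintype n] [DecidableEq n]
    (M : Matrix n n ℝ) : ℝ :=
  sSup {r : ℝ | ∃ μ : ℂ, IsEigenvalue M μ ∧ r = ‖μ‖}

/-!
Reversibility makes `B₀` self-adjoint on `ℓ²(β)`, which `x ↦ √β · x` identifies with Euclidean
space. On the `β`-mean-zero vectors, an invariant subspace, `B₀²` attains its top Rayleigh
quotient `s` at an eigenvector `x`; then `x` or `B₀ x + √s x` is an eigenvector of `B₀` for an
eigenvalue `ν = ±√s`. Since `B₀` fixes constants, that eigenvector minus its uniform mean is a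
`ν`-eigenvector of the centred kernel `P_{kl} = B₀_{kl} - (1/q) Σ_m B₀_{ml}`.

On the rows of genuine edges `(a, i)`, `i ∈ a`, the Jacobian `J̃` coincides with `A ⊗ P`, and both
vanish on the columns of the other pairs. Hence `μ ν` is an eigenvalue of `J̃` whenever `μ ≠ 0`
is one of `A`, and stability gives `|μ| √s < 1`.
-/

open Matrix
open scoped RealInnerProductSpace Kronecker

section EigenvectorOfSquare

variable {R M : Type*} [CommRing R] [AddCommGroup M] [Module R M]

theorem Module.End.exists_eigenvector_of_apply_apply_eq {T : Module.End R M} {p : Submodule R M}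
    (hp : ∀ z ∈ p, T z ∈ p) {a : R} {z : M} (hz : z ∈ p) (hz0 : z ≠ 0)
    (hTTz : T (T z) = (a * a) • z) :
    ∃ y ∈ p, y ≠ 0 ∧ ∃ ν, (ν = a ∨ ν = -a) ∧ T y = ν • y := by
  by_cases hy : T z + a • z = 0
  · exact ⟨z, hz, hz0, -a, Or.inr rfl, by rw [neg_smul]; exact add_eq_zero_iff_eq_neg.mp hy⟩
  · refine ⟨T z + a • z, p.add_mem (hp z hz) (p.smul_mem a hz), hy, a, Or.inl rfl, ?_⟩
    rw [map_add, map_smul, hTTz, smul_add, mul_smul, add_comm]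

end EigenvectorOfSquare

namespace LinearMap.IsSymmetric

variable {E : Type*} [NormedAddCommGroup E] [InnerProductSpace ℝ E] {T : E →ₗ[ℝ] E}

theorem nonneg_of_apply_apply_eq_smul (hT : T.IsSymmetric) {z : E} (hz : z ≠ 0) {s : ℝ}
    (h : T (T z) = s • z) : 0 ≤ s := by
  have : s * ‖z‖ ^ 2 = ‖T z‖ ^ 2 := by
    rw [← real_inner_self_eq_norm_sq, ← real_inner_self_eq_norm_sq, hT, h, real_inner_smul_right]
  have hz' : 0 < ‖z‖ ^ 2 := by positivity
  nlinarith [sq_nonneg ‖T z‖]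

theorem exists_mem_apply_apply_eq_iSup_smul [FiniteDimensional ℝ E] (hT : T.IsSymmetric)
    {H : Submodule ℝ E} [Nontrivial H] (hH : ∀ z ∈ H, T z ∈ H) :
    ∃ z ∈ H, z ≠ 0 ∧
      T (T z) = (⨆ x : {x : H // x ≠ 0}, ⟪T (T x), x⟫ / ‖(x : E)‖ ^ 2) • z := by
  have hTT : (T.restrict hH * T.restrict hH).IsSymmetric :=
    fun x y => by simp only [Module.End.mul_apply, hT.restrict_invariant hH _ _]
  obtain ⟨x, hx⟩ := (hTT.hasEigenvalue_iSup_of_finiteDimensional).exists_hasEigenvector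
  refine ⟨x, x.2, by simpa using hx.2, ?_⟩
  have := congrArg Subtype.val (Module.End.mem_eigenspace_iff.mp hx.1)
  simpa using this

end LinearMap.IsSymmetric

section Reversible

variable {n : Type*} {β : n → ℝ}

noncomputable def weightedEquiv (hβ : ∀ k, 0 < β k) : (n → ℝ) ≃ₗ[ℝ] EuclideanSpace ℝ n :=
  (LinearEquiv.piCongrRight fun k =>
    LinearEquiv.smulOfNeZero ℝ ℝ (√(β k)) (Real.sqrt_pos.2 (hβ k)).ne').trans
    (WithLp.linearEquiv 2 ℝ (n → ℝ)).symm

theorem weightedEquiv_apply (hβ : ∀ k, 0 < β k) (x : n → ℝ) :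
    weightedEquiv hβ x = WithLp.toLp 2 fun k => √(β k) * x k :=
  rfl

variable [Fintype n] {B : Matrix n n ℝ}

noncomputable def centeredRayleighSup (β : n → ℝ) (K : Matrix n n ℝ) : ℝ :=
  sSup {r : ℝ | ∃ x : n → ℝ, x ≠ 0 ∧ (∑ k, x k * β k) = 0 ∧
    r = (∑ k, ∑ l, x k * x l * K k l * β k) / (∑ k, x k ^ 2 * β k)}

theorem inner_weightedEquiv (hβ : ∀ k, 0 < β k) (x y : n → ℝ) :
    ⟪weightedEquiv hβ x, weightedEquiv hβ y⟫ = ∑ k, x k * y k * β k := by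
  simp only [weightedEquiv_apply, EuclideanSpace.inner_toLp_toLp, dotProduct, star_trivial]
  refine Finset.sum_congr rfl fun k _ => ?_
  linear_combination x k * y k * Real.mul_self_sqrt (hβ k).le

theorem sum_mulVec_mul_mul_eq_of_reversible (hrev : ∀ k l, β k * B k l = β l * B l k)
    (x y : n → ℝ) :
    ∑ k, (B *ᵥ x) k * y k * β k = ∑ k, x k * (B *ᵥ y) k * β k := by
  simp only [mulVec, dotProduct, Finset.sum_mul, Finset.mul_sum]
  rw [Finset.sum_comm]
  refine Finset.sum_congr rfl fun l _ => Finset.sum_congr rfl fun k _ => ?_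
  linear_combination x l * y k * hrev k l

theorem sum_mulVec_mul_eq_of_reversible (hrev : ∀ k l, β k * B k l = β l * B l k)
    (hstoch : ∀ k, ∑ l, B k l = 1) (x : n → ℝ) :
    ∑ k, (B *ᵥ x) k * β k = ∑ k, x k * β k := by
  have hB1 : B *ᵥ 1 = 1 := funext fun k => by simp [mulVec, dotProduct, hstoch]
  simpa [hB1] using sum_mulVec_mul_mul_eq_of_reversible hrev x 1

theorem isSymmetric_conj_mulVecLin (hβ : ∀ k, 0 < β k) (hrev : ∀ k l, β k * B k l = β l * B l k) :
    ((weightedEquiv hβ).conj (mulVecLin B)).IsSymmetric := by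
  intro z w
  obtain ⟨x, rfl⟩ := (weightedEquiv hβ).surjective z
  obtain ⟨y, rfl⟩ := (weightedEquiv hβ).surjective w
  simp only [LinearEquiv.conj_apply_apply, LinearEquiv.symm_apply_apply, mulVecLin_apply,
    inner_weightedEquiv, sum_mulVec_mul_mul_eq_of_reversible hrev]

theorem weightedEquiv_mem_orthogonal_one_iff (hβ : ∀ k, 0 < β k) (x : n → ℝ) :
    weightedEquiv hβ x ∈ (ℝ ∙ weightedEquiv hβ 1)ᗮ ↔ ∑ k, x k * β k = 0 := by
  simp [Submodule.mem_orthogonal_singleton_iff_inner_right, inner_weightedEquiv]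

theorem iSup_rayleigh_conj_mulVecLin (hβ : ∀ k, 0 < β k) (K : Matrix n n ℝ) :
    (⨆ z : {z : (ℝ ∙ weightedEquiv hβ 1)ᗮ // z ≠ 0},
        ⟪(weightedEquiv hβ).conj (mulVecLin K) z, z⟫ / ‖(z : EuclideanSpace ℝ n)‖ ^ 2) =
      centeredRayleighSup β K := by
  have hvalue : ∀ x : n → ℝ,
      ⟪(weightedEquiv hβ).conj (mulVecLin K) (weightedEquiv hβ x), weightedEquiv hβ x⟫ /
          ‖weightedEquiv hβ x‖ ^ 2 =
        (∑ k, ∑ l, x k * x l * K k l * β k) / (∑ k, x k ^ 2 * β k) := by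
    intro x
    rw [← real_inner_self_eq_norm_sq]
    simp only [LinearEquiv.conj_apply_apply, LinearEquiv.symm_apply_apply, mulVecLin_apply,
      inner_weightedEquiv, mulVec, dotProduct, Finset.sum_mul]
    congr 1
    · exact Finset.sum_congr rfl fun k _ => Finset.sum_congr rfl fun l _ => by ring
    · exact Finset.sum_congr rfl fun k _ => by ring
  rw [iSup, centeredRayleighSup]
  congr 1
  ext r
  constructor
  · rintro ⟨⟨⟨z, hz⟩, hz0⟩, rfl⟩
    obtain ⟨x, rfl⟩ := (weightedEquiv hβ).surjective z
    refine ⟨x, ?_, (weightedEquiv_mem_orthogonal_one_iff hβ x).1 hz, hvalue x⟩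
    rintro rfl
    exact hz0 (by simp)
  · rintro ⟨x, hx0, hx, rfl⟩
    refine ⟨⟨⟨weightedEquiv hβ x, (weightedEquiv_mem_orthogonal_one_iff hβ x).2 hx⟩, ?_⟩, hvalue x⟩
    simpa using hx0

theorem exists_meanZero_eigenvector_of_reversible (hn : 1 < Fintype.card n)
    (hβ : ∀ k, 0 < β k) (hstoch : ∀ k, ∑ l, B k l = 1) (hrev : ∀ k l, β k * B k l = β l * B l k) :
    ∃ (ν : ℝ) (x : n → ℝ), x ≠ 0 ∧ ∑ k, x k * β k = 0 ∧ B *ᵥ x = ν • x ∧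
      |ν| = √(centeredRayleighSup β (B * B)) := by
  set T := (weightedEquiv hβ).conj (mulVecLin B)
  have hT : T.IsSymmetric := isSymmetric_conj_mulVecLin hβ hrev
  have hH : ∀ z ∈ (ℝ ∙ weightedEquiv hβ 1)ᗮ, T z ∈ (ℝ ∙ weightedEquiv hβ 1)ᗮ := by
    intro z hz
    obtain ⟨x, rfl⟩ := (weightedEquiv hβ).surjective z
    rw [weightedEquiv_mem_orthogonal_one_iff] at hz
    simpa [T, weightedEquiv_mem_orthogonal_one_iff, sum_mulVec_mul_eq_of_reversible hrev hstoch]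
  have : Nontrivial (ℝ ∙ weightedEquiv hβ 1)ᗮ := by
    have h1 := finrank_span_le_card (R := ℝ) ({weightedEquiv hβ 1} : Set (EuclideanSpace ℝ n))
    have h2 := (ℝ ∙ weightedEquiv hβ 1).finrank_add_finrank_orthogonal
    rw [finrank_euclideanSpace] at h2
    simp only [Set.toFinset_singleton, Finset.card_singleton] at h1
    exact Module.finrank_pos_iff.mp (show 0 < Module.finrank ℝ (ℝ ∙ weightedEquiv hβ 1)ᗮ by omega)
  have hTT : ∀ z, T (T z) = (weightedEquiv hβ).conj (mulVecLin (B * B)) z := by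
    simp [T, mulVec_mulVec]
  obtain ⟨z, hzH, hz0, hTTz⟩ := hT.exists_mem_apply_apply_eq_iSup_smul hH
  simp only [hTT] at hTTz
  rw [iSup_rayleigh_conj_mulVecLin, ← hTT] at hTTz
  set s := centeredRayleighSup β (B * B)
  have hs : 0 ≤ s := hT.nonneg_of_apply_apply_eq_smul hz0 hTTz
  rw [← Real.mul_self_sqrt hs] at hTTz
  obtain ⟨y, hyH, hy0, ν, hν, hTy⟩ :=
    Module.End.exists_eigenvector_of_apply_apply_eq hH hzH hz0 hTTz
  obtain ⟨x, rfl⟩ := (weightedEquiv hβ).surjective y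
  refine ⟨ν, x, by simpa using hy0, (weightedEquiv_mem_orthogonal_one_iff hβ x).1 hyH,
    (weightedEquiv hβ).injective ?_, ?_⟩
  · simpa [T] using hTy
  · rcases hν with rfl | rfl <;> simp [abs_of_nonneg (Real.sqrt_nonneg s)]

end Reversible

section Centering

variable {n : Type*} [Fintype n] {B : Matrix n n ℝ}

noncomputable def centeredKernel (B : Matrix n n ℝ) : Matrix n n ℝ :=
  of fun k l => B k l - (1 / (Fintype.card n : ℝ)) * ∑ m, B m l

theorem centeredKernel_mulVec_apply (y : n → ℝ) (k : n) :
    (centeredKernel B *ᵥ y) k = (B *ᵥ y) k - (1 / (Fintype.card n : ℝ)) * ∑ m, (B *ᵥ y) m := by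
  simp only [centeredKernel, mulVec, dotProduct, of_apply, sub_mul, Finset.sum_sub_distrib,
    Finset.mul_sum, Finset.sum_mul]
  rw [Finset.sum_comm (f := fun m l => _)]
  simp only [mul_assoc]

theorem centeredKernel_mulVec_sub_mean [Nonempty n] (hstoch : ∀ k, ∑ l, B k l = 1) {ν : ℝ}
    {x : n → ℝ} (hx : B *ᵥ x = ν • x) :
    centeredKernel B *ᵥ (x - ((∑ k, x k) / Fintype.card n) • 1) =
      ν • (x - ((∑ k, x k) / Fintype.card n) • 1) := by
  have hB1 : B *ᵥ 1 = 1 := funext fun k => by simp [mulVec, dotProduct, hstoch]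
  have hcard : (Fintype.card n : ℝ) ≠ 0 := by positivity
  funext k
  rw [centeredKernel_mulVec_apply, mulVec_sub, mulVec_smul, hx, hB1]
  simp only [Pi.sub_apply, Pi.smul_apply, smul_eq_mul, Pi.one_apply, mul_one,
    Finset.sum_sub_distrib, ← Finset.mul_sum, Finset.sum_const, Finset.card_univ, nsmul_eq_mul]
  field_simp
  ring

theorem sub_smul_one_ne_zero [Nonempty n] {β : n → ℝ} (hβ : ∀ k, 0 < β k) {x : n → ℝ}
    (hx0 : x ≠ 0) (hx : ∑ k, x k * β k = 0) (a : ℝ) : x - a • 1 ≠ 0 := by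
  intro h
  rw [sub_eq_zero] at h
  have hβsum : 0 < ∑ k, β k := Finset.sum_pos (fun k _ => hβ k) Finset.univ_nonempty
  have ha : a = 0 := by
    simpa [h, ← Finset.mul_sum, hβsum.ne'] using hx
  exact hx0 (by simp [h, ha])

theorem exists_centeredKernel_eigenvector {β : n → ℝ} (hn : 1 < Fintype.card n)
    (hβ : ∀ k, 0 < β k) (hstoch : ∀ k, ∑ l, B k l = 1) (hrev : ∀ k l, β k * B k l = β l * B l k) :
    ∃ (ν : ℝ) (z : n → ℝ), z ≠ 0 ∧ centeredKernel B *ᵥ z = ν • z ∧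
      |ν| = √(centeredRayleighSup β (B * B)) := by
  have : Nonempty n := Fintype.card_pos_iff.mp (by omega)
  obtain ⟨ν, x, hx0, hx, hBx, hν⟩ := exists_meanZero_eigenvector_of_reversible hn hβ hstoch hrev
  exact ⟨ν, _, sub_smul_one_ne_zero hβ hx0 hx _, centeredKernel_mulVec_sub_mean hstoch hBx, hν⟩

end Centering

theorem Matrix.mulVec_eq_mulVec_of_eqOn {m n R : Type*} [Fintype n] [NonUnitalNonAssocSemiring R]
    {M : Matrix m n R} {G : Set n} (hM : ∀ i, ∀ j ∉ G, M i j = 0) {x y : n → R}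
    (hxy : Set.EqOn x y G) : M *ᵥ x = M *ᵥ y := by
  funext i
  refine Finset.sum_congr rfl fun j _ => ?_
  by_cases hj : j ∈ G
  · rw [hxy hj]
  · simp [hM i j hj]

section Eigenvalues

variable {m n : Type*} [Fintype m] [DecidableEq m] [Fintype n] [DecidableEq n]

theorem IsEigenvalue.kronecker {A : Matrix m m ℝ} {P : Matrix n n ℝ} {μ : ℂ}
    (hA : IsEigenvalue A μ) {ν : ℝ} {z : n → ℝ} (hz0 : z ≠ 0) (hPz : P *ᵥ z = ν • z) :
    IsEigenvalue (A ⊗ₖ P) (μ * ν) := by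
  obtain ⟨w, hw0, hAw⟩ := hA
  obtain ⟨i, hi⟩ := Function.ne_iff.mp hw0
  obtain ⟨k, hk⟩ := Function.ne_iff.mp hz0
  refine ⟨fun p => w p.1 * z p.2, Function.ne_iff.mpr ⟨(i, k), by simpa using ⟨hi, hk⟩⟩, ?_⟩
  funext ⟨i, k⟩
  have hAwi := congrFun hAw i
  have hPzk : ∑ l, (P k l : ℂ) * z l = ν * z k := by exact_mod_cast congrFun hPz k
  simp only [mulVec, dotProduct, map_apply, Pi.smul_apply, smul_eq_mul] at hAwi ⊢
  simp only [kroneckerMap_apply, Fintype.sum_prod_type, Complex.ofReal_mul]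
  calc ∑ j, ∑ l, (A i j : ℂ) * P k l * (w j * z l)
      = (∑ j, (A i j : ℂ) * w j) * ∑ l, (P k l : ℂ) * z l := by
        rw [Finset.sum_mul_sum]
        exact Finset.sum_congr rfl fun j _ => Finset.sum_congr rfl fun l _ => by ring
    _ = μ * ν * (w i * z k) := by rw [hAwi, hPzk]; ring

theorem IsEigenvalue.of_eqOn_rows {M K : Matrix n n ℝ} {G : Set n} (hrow : ∀ i ∈ G, M i = K i)
    (hM : ∀ i, ∀ j ∉ G, M i j = 0) (hK : ∀ i, ∀ j ∉ G, K i j = 0) {μ : ℂ} (hμ : μ ≠ 0)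
    (h : IsEigenvalue K μ) : IsEigenvalue M μ := by
  obtain ⟨x, hx0, hKx⟩ := h
  have hMx : Set.EqOn (M.map (↑) *ᵥ x) (μ • x) G := fun i hi => by
    rw [← hKx]
    simp [mulVec, dotProduct, hrow i hi]
  -- `M` only reads the coordinates in `G`, where `M x` equals `μ x`: so `M x` is the eigenvector.
  refine ⟨M.map (↑) *ᵥ x, fun h0 => hx0 ?_, ?_⟩
  · have hxG : Set.EqOn x 0 G := fun i hi => by
      simpa [h0, hμ, eq_comm] using hMx hi
    rw [← smul_right_injective _ hμ |>.eq_iff, ← hKx, smul_zero,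
      mulVec_eq_mulVec_of_eqOn (fun i j hj => by simp [hK i j hj]) hxG, mulVec_zero]
  · rw [mulVec_eq_mulVec_of_eqOn (fun i j hj => by simp [hM i j hj]) hMx, mulVec_smul]

theorem specRad_mul_le_one {M : Matrix n n ℝ} {c : ℝ} (hc : 0 ≤ c)
    (h : ∀ μ, IsEigenvalue M μ → ‖μ‖ * c ≤ 1) : specRad M * c ≤ 1 := by
  rcases hc.eq_or_lt with rfl | hc
  · simp
  rw [← le_div_iff₀ hc]
  refine Real.sSup_le ?_ (by positivity)
  rintro r ⟨μ, hμ, rfl⟩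
  exact (le_div_iff₀ hc).mpr (h μ hμ)

end Eigenvalues

omit [Fintype V] [Fintype F] in
theorem Amat_eq_zero_of_not_mem {S : F → Finset V} {e e' : F × V} (h : e'.2 ∉ S e'.1) :
    Amat S e e' = 0 := by
  simp [Amat, h]

omit [Fintype V] [Fintype F] in
theorem Jtilde_eq_zero_of_not_mem {S : F → Finset V} {q : ℕ} (bv : V → Fin q → ℝ)
    (bf : ∀ a : F, Config S q a → ℝ) (p : (F × V) × Fin q) {p' : (F × V) × Fin q}
    (h : p'.1.2 ∉ S p'.1.1) : Jtilde S bv bf p p' = 0 := by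
  simp [Jtilde, Amat_eq_zero_of_not_mem h]

omit [Fintype V] [Fintype F] in
theorem Jtilde_eq_kronecker_of_mem {S : F → Finset V} {q : ℕ} {bv : V → Fin q → ℝ}
    {bf : ∀ a : F, Config S q a → ℝ} {B₀ : Matrix (Fin q) (Fin q) ℝ}
    (hhomB : ∀ (a : F) (i j : V), i ∈ S a → j ∈ S a → i ≠ j → Bmat S bv bf a i j = B₀)
    {p : (F × V) × Fin q} (hp : p.1.2 ∈ S p.1.1) :
    Jtilde S bv bf p = (Amat S ⊗ₖ centeredKernel B₀) p := by
  funext p'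
  by_cases hA : p'.1.2 ∈ S p.1.1 ∧ p'.1.2 ∈ S p'.1.1 ∧ p'.1.2 ≠ p.1.2 ∧ p'.1.1 ≠ p.1.1
  · simp [Jtilde, Amat, centeredKernel, hA, hhomB _ _ _ hp hA.1 (Ne.symm hA.2.2.1)]
  · simp [Jtilde, Amat, hA]

theorem homogeneous_stability_necessary_condition_general
    (q : ℕ) (hq : 2 ≤ q) (S : F → Finset V)
    (bv : V → Fin q → ℝ) (bf : ∀ a : F, Config S q a → ℝ)
    -- homogeneity
    (β : Fin q → ℝ) (hβpos : ∀ k, 0 < β k)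
    (B₀ : Matrix (Fin q) (Fin q) ℝ)
    (hB₀stoch : ∀ k, ∑ l, B₀ k l = 1)
    (hB₀rev : ∀ k l, β k * B₀ k l = β l * B₀ l k)
    (hhomB : ∀ (a : F) (i j : V), i ∈ S a → j ∈ S a → i ≠ j →
      Bmat S bv bf a i j = B₀) :
    -- local stability implies λ₁ μ₂ ≤ 1
    (∀ μ : ℂ, IsEigenvalue (Jtilde S bv bf) μ → ‖μ‖ < 1) →
      specRad (Amat S) *
        Real.sqrt (sSup {r : ℝ | ∃ x : Fin q → ℝ, x ≠ 0 ∧ (∑ k, x k * β k) = 0 ∧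
          r = (∑ k, ∑ l, x k * x l * (B₀ * B₀) k l * β k) / (∑ k, x k ^ 2 * β k)})
        ≤ 1 := by
  intro hstab
  obtain ⟨ν, z, hz0, hPz, hν⟩ :=
    exists_centeredKernel_eigenvector (by rw [Fintype.card_fin]; omega) hβpos hB₀stoch hB₀rev
  rw [← centeredRayleighSup, ← hν]
  refine specRad_mul_le_one (abs_nonneg ν) fun μ hμ => ?_
  rcases eq_or_ne (μ * ν) 0 with h0 | h0
  · simp [← Real.norm_eq_abs, ← Complex.norm_real, ← norm_mul, h0]
  · have hJ : IsEigenvalue (Jtilde S bv bf) (μ * ν) :=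
      (hμ.kronecker hz0 hPz).of_eqOn_rows (G := {p : (F × V) × Fin q | p.1.2 ∈ S p.1.1})
        (fun p hp => Jtilde_eq_kronecker_of_mem hhomB hp)
        (fun p p' hp' => Jtilde_eq_zero_of_not_mem bv bf p hp')
        (fun p p' hp' => by simp [Amat_eq_zero_of_not_mem hp']) h0
    simpa using (hstab _ hJ).le

/-- Necessity of `λ₁ μ₂ ≤ 1` in the homogeneous case: if all single-variable beliefs equal
a common `β`, all conditional-belief matrices equal a common row-stochastic `B₀` reversible
w.r.t. `β`, and every complex eigenvalue of `J̃` has modulus `< 1` (local stability), then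
`λ₁ · μ₂ ≤ 1` where `μ₂ = √(μ₂ of K = B₀B₀)`. -/
theorem homogeneous_stability_necessary_condition
    (q : ℕ) (hq : 2 ≤ q) (S : F → Finset V) (hcard : ∀ a, 2 ≤ (S a).card)
    (bv : V → Fin q → ℝ) (bf : ∀ a : F, Config S q a → ℝ)
    (hbv : ∀ i x, 0 < bv i x) (hbf : ∀ a y, 0 < bf a y)
    (hsumv : ∀ i, ∑ x, bv i x = 1)
    (hsumf : ∀ a, ∑ y : Config S q a, bf a y = 1)
    (hcompat : ∀ a i (hi : i ∈ S a) (k : Fin q),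
      ∑ y ∈ univ.filter (fun y : Config S q a => y ⟨i, hi⟩ = k), bf a y = bv i k)
    -- homogeneity
    (β : Fin q → ℝ) (hβpos : ∀ k, 0 < β k) (hβsum : ∑ k, β k = 1)
    (hhomv : ∀ i : V, bv i = β)
    (B₀ : Matrix (Fin q) (Fin q) ℝ)
    (hB₀stoch : ∀ k, ∑ l, B₀ k l = 1)
    (hB₀rev : ∀ k l, β k * B₀ k l = β l * B₀ l k)
    (hhomB : ∀ (a : F) (i j : V), i ∈ S a → j ∈ S a → i ≠ j →
      Bmat S bv bf a i j = B₀)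
    -- the line graph has at least one pair of distinct edges with A-entry 1
    (hadj : ∃ e e' : F × V, Amat S e e' = 1) :
    -- local stability implies λ₁ μ₂ ≤ 1
    (∀ μ : ℂ, IsEigenvalue (Jtilde S bv bf) μ → ‖μ‖ < 1) →
      specRad (Amat S) *
        Real.sqrt (sSup {r : ℝ | ∃ x : Fin q → ℝ, x ≠ 0 ∧ (∑ k, x k * β k) = 0 ∧
          r = (∑ k, ∑ l, x k * x l * (B₀ * B₀) k l * β k) / (∑ k, x k ^ 2 * β k)})
        ≤ 1 :=
  homogeneous_stability_necessary_condition_general q hq S bv bf β hβpos B₀ hB₀stoch hB₀rev hhomB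
end

section
/- Let p be a strictly positive probability distribution on {1,2}×{1,2}, with marginals p₁(k) = Σ_l p(k,l) and p₂(l) = Σ_k p(k,l). Define the 2×2 row-stochastic matrices B_{kl} = p(k,l)/p₁(k) and B'_{lk} = p(k,l)/p₂(l), and the combined kernel K = B·B'. Then the eigenvalues of K are 1 and det(K), and det(K) = ρ², where ρ is the Pearson correlation coefficient, under p, of the two coordinate random variables (viewed as real-valued); in particular the second eigenvalue of K equals the square of the Pearson correlation between the two variables. -/
/-!
`B` and `B'` are row-stochastic, hence so is `K = B * B'`, and a row-stochastic `2 × 2` matrix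
has the eigenvalue `1`, so its other eigenvalue is `det K`. Normalising rows divides the
determinant by the product of the row sums, so `det K = (det p)² / (∏ p₁ · ∏ p₂)`. On the other
hand, for a `2 × 2` table of total mass `1` the covariance of the coordinates is `det p` and their
variances are `p₁ 0 * p₁ 1` and `p₂ 0 * p₂ 1`.
-/

open Finset Polynomial

namespace Matrix

variable {n R : Type*} [Fintype n] [DecidableEq n]

def rowNormalize [DivisionRing R] (A : Matrix n n R) : Matrix n n R :=
  of fun i j => A i j / ∑ j', A i j'

lemma rowNormalize_mem_rowStochastic [Field R] [LinearOrder R] [IsStrictOrderedRing R]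
    {A : Matrix n n R} (hA : ∀ i j, 0 ≤ A i j) (hrow : ∀ i, ∑ j, A i j ≠ 0) :
    rowNormalize A ∈ rowStochastic R n := by
  refine mem_rowStochastic_iff_sum.2
    ⟨fun i j => div_nonneg (hA i j) (sum_nonneg fun j _ => hA i j), fun i => ?_⟩
  simp only [rowNormalize, of_apply, ← sum_div]
  exact div_self (hrow i)

lemma det_rowNormalize [Field R] (A : Matrix n n R) :
    (rowNormalize A).det = A.det / ∏ i, ∑ j, A i j := by
  have h := det_mul_column (fun i => (∑ j, A i j)⁻¹) A
  simp only [prod_inv_distrib] at h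
  rw [div_eq_inv_mul, ← h]
  congr 1
  ext i j
  simp [rowNormalize, div_eq_inv_mul]

lemma trace_eq_one_add_det_of_mulVec_one [CommRing R] {M : Matrix (Fin 2) (Fin 2) R}
    (hM : M *ᵥ 1 = 1) : M.trace = 1 + M.det := by
  have h0 := congrFun hM 0
  have h1 := congrFun hM 1
  simp only [mulVec, dotProduct, Fin.sum_univ_two, Pi.one_apply, mul_one] at h0 h1
  rw [trace_fin_two, det_fin_two]
  linear_combination M 1 0 * h0 + (1 - M 0 0) * h1

lemma charpoly_eq_of_mulVec_one [CommRing R] [Nontrivial R] {M : Matrix (Fin 2) (Fin 2) R}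
    (hM : M *ᵥ 1 = 1) : M.charpoly = (X - 1) * (X - C M.det) := by
  rw [charpoly_fin_two, trace_eq_one_add_det_of_mulVec_one hM, map_add, map_one]
  ring

end Matrix

open Matrix

section TwoByTwoTable

variable (p : Fin 2 → Fin 2 → ℝ) (hsum : ∑ k, ∑ l, p k l = 1)
include hsum

lemma covariance_fin_two (x y : Fin 2 → ℝ) :
    ∑ k, ∑ l, x k * y l * p k l - (∑ k, ∑ l, x k * p k l) * (∑ k, ∑ l, y l * p k l)
      = (x 1 - x 0) * (y 1 - y 0) * (of p).det := by
  simp only [det_fin_two, of_apply, Fin.sum_univ_two] at hsum ⊢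
  linear_combination
    (-(x 0 * y 0 * p 0 0 + x 0 * y 1 * p 0 1 + x 1 * y 0 * p 1 0 + x 1 * y 1 * p 1 1)) * hsum

lemma variance_fst_fin_two (x : Fin 2 → ℝ) :
    ∑ k, ∑ l, x k ^ 2 * p k l - (∑ k, ∑ l, x k * p k l) ^ 2
      = (x 1 - x 0) ^ 2 * ((∑ l, p 0 l) * ∑ l, p 1 l) := by
  simp only [Fin.sum_univ_two] at hsum ⊢
  linear_combination (-(x 0 ^ 2 * (p 0 0 + p 0 1) + x 1 ^ 2 * (p 1 0 + p 1 1))) * hsum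

lemma variance_snd_fin_two (y : Fin 2 → ℝ) :
    ∑ k, ∑ l, y l ^ 2 * p k l - (∑ k, ∑ l, y l * p k l) ^ 2
      = (y 1 - y 0) ^ 2 * ((∑ k, p k 0) * ∑ k, p k 1) := by
  rw [sum_comm, sum_comm (f := fun k l => y l * p k l)]
  exact variance_fst_fin_two (fun l k => p k l) (by rwa [sum_comm]) y

end TwoByTwoTable

/-- For a strictly positive probability distribution `p` on `{1,2}×{1,2}`, with
`B_{kl} = p(k,l)/p₁(k)`, `B'_{lk} = p(k,l)/p₂(l)` and `K = B·B'`, the eigenvalues of `K`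
are `1` and `det K` (its characteristic polynomial is `(X−1)(X−det K)`), and
`det K = ρ²` where `ρ` is the Pearson correlation coefficient of the two coordinates. -/
theorem two_by_two_second_eigenvalue_is_correlation_sq
    (p : Fin 2 → Fin 2 → ℝ) (hp : ∀ k l, 0 < p k l)
    (hsum : ∑ k, ∑ l, p k l = 1)
    (p₁ p₂ : Fin 2 → ℝ)
    (hp₁ : ∀ k, p₁ k = ∑ l, p k l) (hp₂ : ∀ l, p₂ l = ∑ k, p k l)
    (B B' K : Matrix (Fin 2) (Fin 2) ℝ)
    (hB : ∀ k l, B k l = p k l / p₁ k)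
    (hB' : ∀ l k, B' l k = p k l / p₂ l)
    (hK : K = B * B')
    -- the coordinates viewed as real-valued random variables (values 1 and 2)
    (X Y : Fin 2 → Fin 2 → ℝ)
    (hX : ∀ k l, X k l = (k : ℕ) + 1) (hY : ∀ k l, Y k l = (l : ℕ) + 1)
    (EX EY EXY varX varY ρ : ℝ)
    (hEX : EX = ∑ k, ∑ l, X k l * p k l)
    (hEY : EY = ∑ k, ∑ l, Y k l * p k l)
    (hEXY : EXY = ∑ k, ∑ l, X k l * Y k l * p k l)
    (hvarX : varX = (∑ k, ∑ l, X k l ^ 2 * p k l) - EX ^ 2)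
    (hvarY : varY = (∑ k, ∑ l, Y k l ^ 2 * p k l) - EY ^ 2)
    (hρ : ρ = (EXY - EX * EY) / (Real.sqrt varX * Real.sqrt varY)) :
    K.charpoly = (Polynomial.X - 1) * (Polynomial.X - Polynomial.C K.det) ∧
      K.det = ρ ^ 2 := by
  have hrow : ∀ k, 0 < p₁ k := fun k => hp₁ k ▸ sum_pos (fun l _ => hp k l) univ_nonempty
  have hcol : ∀ l, 0 < p₂ l := fun l => hp₂ l ▸ sum_pos (fun k _ => hp k l) univ_nonempty
  have hB_eq : B = rowNormalize (of p) := by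
    ext k l; simp [rowNormalize, hB, hp₁]
  have hB'_eq : B' = rowNormalize (of p)ᵀ := by
    ext l k; simp [rowNormalize, hB', hp₂]
  have hK_stochastic : K ∈ rowStochastic ℝ (Fin 2) := hK ▸ hB_eq ▸ hB'_eq ▸ mul_mem
    (rowNormalize_mem_rowStochastic (fun k l => (hp k l).le) fun k => hp₁ k ▸ (hrow k).ne')
    (rowNormalize_mem_rowStochastic (fun l k => (hp k l).le) fun l => hp₂ l ▸ (hcol l).ne')
  refine ⟨charpoly_eq_of_mulVec_one hK_stochastic.2, ?_⟩
  have hdetK : K.det = (of p).det ^ 2 / ((p₁ 0 * p₁ 1) * (p₂ 0 * p₂ 1)) := by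
    rw [hK, det_mul, hB_eq, hB'_eq, det_rowNormalize, det_rowNormalize, det_transpose]
    simp only [Fin.prod_univ_two, transpose_apply, of_apply, hp₁, hp₂]
    ring
  have hX' : ∀ k l, X k l = (fun i : Fin 2 => ((i : ℕ) : ℝ) + 1) k := hX
  have hY' : ∀ k l, Y k l = (fun i : Fin 2 => ((i : ℕ) : ℝ) + 1) l := hY
  have hcov : EXY - EX * EY = (of p).det := by
    simp only [hEXY, hEX, hEY, hX', hY', covariance_fin_two p hsum]
    norm_num
  have hvarX' : varX = p₁ 0 * p₁ 1 := by
    simp only [hvarX, hEX, hX', variance_fst_fin_two p hsum, hp₁]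
    norm_num
  have hvarY' : varY = p₂ 0 * p₂ 1 := by
    simp only [hvarY, hEY, hY', variance_snd_fin_two p hsum, hp₂]
    norm_num
  rw [hρ, hcov, hvarX', hvarY', hdetK, div_pow, mul_pow,
    Real.sq_sqrt (mul_pos (hrow 0) (hrow 1)).le, Real.sq_sqrt (mul_pos (hcol 0) (hcol 1)).le]
end
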